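/- arXiv:1509.05119 — 7 statements merged into one kernel-verified Lean document; each statement's English description precedes it below -/
import Mathlib

section
/- Let C : ℝ → ℝ be a convex nonnegative function with lim_{x→+∞} C(x) = 0 and lim_{x→-∞} (C(x) + x) = l for some real l. Then there exists a unique integrable probability measure ν on ℝ such that C(x) = ∫ (y-x)⁺ ν(dy) for all x, and moreover ∫ y ν(dy) = l. -/
/-!
The measure is `ν = dC'₊`, the Stieltjes measure of the right derivative of `C`. Convexity makes
`C'₊` monotone and right-continuous, and the limits of `C` at `±∞` force `C'₊ → 0` at `+∞` and
`C'₊ → -1` at `-∞`, so `ν` is a probability measure with `ν (t, ∞) = -C'₊ t`. By the layer-cake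
formula `∫ (y - x)⁺ dν = ∫_x^∞ ν (t, ∞) dt = ∫_x^∞ -C'₊ = C x`. Since `∫ max y x dν = C x + x`
decreases to `∫ y dν` as `x → -∞`, Fatou's lemma gives integrability and dominated convergence
gives the mean `l`. Conversely, for any integrable probability measure `μ` the right derivative
of `x ↦ ∫ (y - x)⁺ dμ` is `F_μ x - 1`, with `F_μ` the distribution function, so `C` determines `μ`.
-/

open MeasureTheory Set Filter Topology ProbabilityTheory

namespace ConvexOn

variable {f : ℝ → ℝ}

lemma hasDerivWithinAt_rightDeriv (hf : ConvexOn ℝ univ f) (x : ℝ) :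
    HasDerivWithinAt f (derivWithin f (Ioi x) x) (Ioi x) x :=
  hf.hasDerivWithinAt_rightDeriv_of_mem_interior (by simp)

lemma monotone_rightDeriv (hf : ConvexOn ℝ univ f) :
    Monotone fun x ↦ derivWithin f (Ioi x) x := by
  simpa using hf.monotoneOn_rightDeriv

lemma slope_le_rightDeriv (hf : ConvexOn ℝ univ f) {x y : ℝ} (hxy : x < y) :
    slope f x y ≤ derivWithin f (Ioi y) y :=
  (hf.slope_le_leftDeriv_of_mem_interior (mem_univ x) (by simp) hxy).trans
    (hf.leftDeriv_le_rightDeriv_of_mem_interior (by simp))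

lemma continuousWithinAt_rightDeriv (hf : ConvexOn ℝ univ f) (x : ℝ) :
    ContinuousWithinAt (fun x ↦ derivWithin f (Ioi x) x) (Ici x) x := by
  rw [← continuousWithinAt_Ioi_iff_Ici, ContinuousWithinAt, tendsto_order]
  refine ⟨fun a ha ↦ eventually_nhdsWithin_of_forall fun z hz ↦
    ha.trans_le (hf.monotone_rightDeriv (le_of_lt hz)), fun b hb ↦ ?_⟩
  -- choose `u > x` with `slope f x u < b`; then `f'₊ z ≤ slope f z u < b` for `z` near `x`
  have hslope := (hasDerivWithinAt_iff_tendsto_slope' self_notMem_Ioi).1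
    (hf.hasDerivWithinAt_rightDeriv x)
  obtain ⟨u, hu, hxu⟩ := ((hslope.eventually (gt_mem_nhds hb)).and self_mem_nhdsWithin).exists
  have hcont : Tendsto (fun z ↦ slope f z u) (𝓝 x) (𝓝 (slope f x u)) := by
    have hfc := hf.locallyLipschitz.continuous
    simp only [slope_def_field]
    exact ((continuousAt_const.sub hfc.continuousAt).div
      (continuousAt_const.sub continuousAt_id) (sub_ne_zero.2 (ne_of_gt hxu))).tendsto
  filter_upwards [nhdsWithin_le_nhds (hcont.eventually (gt_mem_nhds hu)),
    Ioo_mem_nhdsGT hxu] with z hz hzu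
  exact (hf.rightDeriv_le_slope_of_mem_interior (by simp) (mem_univ u) hzu.2).trans_lt hz

lemma tendsto_rightDeriv (hf : ConvexOn ℝ univ f) {l : Filter ℝ} (hl₁ : Tendsto (· + 1) l l)
    (hl₂ : Tendsto (· - 1) l l) {a c : ℝ} (h : Tendsto (fun x ↦ f x + c * x) l (𝓝 a)) :
    Tendsto (fun x ↦ derivWithin f (Ioi x) x) l (𝓝 (-c)) := by
  have hup : Tendsto (fun x ↦ f (x + 1) - f x) l (𝓝 (-c)) := by
    have := ((h.comp hl₁).sub h).sub_const c
    simp only [Function.comp_def, sub_self, zero_sub] at this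
    exact this.congr fun x ↦ by ring
  have hlow : Tendsto (fun x ↦ f x - f (x - 1)) l (𝓝 (-c)) := by
    simpa [Function.comp_def] using hup.comp hl₂
  refine tendsto_of_tendsto_of_tendsto_of_le_of_le hlow hup (fun x ↦ ?_) fun x ↦ ?_
  · simpa [slope_def_field] using hf.slope_le_rightDeriv (sub_one_lt x)
  · simpa [slope_def_field] using
      hf.rightDeriv_le_slope_of_mem_interior (by simp) (mem_univ _) (lt_add_one x)

lemma tendsto_rightDeriv_atTop (hf : ConvexOn ℝ univ f) {a : ℝ} (h : Tendsto f atTop (𝓝 a)) :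
    Tendsto (fun x ↦ derivWithin f (Ioi x) x) atTop (𝓝 0) := by
  simpa using hf.tendsto_rightDeriv (tendsto_atTop_add_const_right _ 1 tendsto_id)
    (tendsto_atTop_add_const_right _ (-1) tendsto_id) (c := 0) (by simpa using h)

lemma tendsto_rightDeriv_atBot (hf : ConvexOn ℝ univ f) {a : ℝ}
    (h : Tendsto (fun x ↦ f x + x) atBot (𝓝 a)) :
    Tendsto (fun x ↦ derivWithin f (Ioi x) x) atBot (𝓝 (-1)) :=
  hf.tendsto_rightDeriv (tendsto_atBot_add_const_right _ 1 tendsto_id)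
    (tendsto_atBot_add_const_right _ (-1) tendsto_id) (c := 1) (by simpa using h)

noncomputable def rightDerivStieltjes (hf : ConvexOn ℝ univ f) : StieltjesFunction ℝ where
  toFun x := derivWithin f (Ioi x) x
  mono' := hf.monotone_rightDeriv
  right_continuous' := hf.continuousWithinAt_rightDeriv

lemma measure_rightDerivStieltjes_Ioi (hf : ConvexOn ℝ univ f) {a : ℝ}
    (htop : Tendsto f atTop (𝓝 a)) (x : ℝ) :
    hf.rightDerivStieltjes.measure (Ioi x) = ENNReal.ofReal (-derivWithin f (Ioi x) x) := by
  rw [StieltjesFunction.measure_Ioi _ (hf.tendsto_rightDeriv_atTop htop), zero_sub]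
  rfl

lemma isProbabilityMeasure_rightDerivStieltjes (hf : ConvexOn ℝ univ f) {a b : ℝ}
    (htop : Tendsto f atTop (𝓝 a)) (hbot : Tendsto (fun x ↦ f x + x) atBot (𝓝 b)) :
    IsProbabilityMeasure hf.rightDerivStieltjes.measure :=
  ⟨by simp [hf.rightDerivStieltjes.measure_univ (hf.tendsto_rightDeriv_atBot hbot)
    (hf.tendsto_rightDeriv_atTop htop)]⟩

end ConvexOn

lemma lintegral_Ioi_eq_ofReal_of_hasDerivWithinAt_Ioi {f f' : ℝ → ℝ} {a L : ℝ}
    (hf : ContinuousOn f (Ici a)) (hderiv : ∀ x ∈ Ioi a, HasDerivWithinAt f (f' x) (Ioi x) x)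
    (hint : ∀ b, IntegrableOn f' (Ioc a b)) (hf' : ∀ x ∈ Ioi a, 0 ≤ f' x)
    (hlim : Tendsto f atTop (𝓝 L)) :
    ∫⁻ x in Ioi a, ENNReal.ofReal (f' x) = ENNReal.ofReal (L - f a) := by
  have hcover : AECover (volume.restrict (Ioi a)) atTop (Ioc a) :=
    ⟨by
      filter_upwards [ae_restrict_mem measurableSet_Ioi] with x hx
      exact (eventually_ge_atTop x).mono fun b hb ↦ ⟨hx, hb⟩,
    fun _ ↦ measurableSet_Ioc⟩
  have hrestrict (b : ℝ) :
      (volume.restrict (Ioi a)).restrict (Ioc a b) = volume.restrict (Ioc a b) := by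
    rw [Measure.restrict_restrict measurableSet_Ioc, inter_eq_left.2 Ioc_subset_Ioi_self]
  have hmeas : AEStronglyMeasurable f' (volume.restrict (Ioi a)) :=
    hcover.aestronglyMeasurable fun b ↦ by rw [hrestrict]; exact (hint b).aestronglyMeasurable
  refine hcover.lintegral_eq_of_tendsto _ hmeas.aemeasurable.ennreal_ofReal ?_
  refine ENNReal.tendsto_ofReal (hlim.sub_const _) |>.congr' ?_
  filter_upwards [eventually_ge_atTop a] with b hab
  rw [hrestrict, ← ofReal_integral_eq_lintegral_ofReal (hint b)
      (ae_restrict_of_forall_mem measurableSet_Ioc fun x hx ↦ hf' x hx.1),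
    ← intervalIntegral.integral_of_le hab,
    intervalIntegral.integral_eq_sub_of_hasDeriv_right_of_le hab (hf.mono Icc_subset_Ici_self)
      (fun x hx ↦ hderiv x hx.1) ((intervalIntegrable_iff_integrableOn_Ioc_of_le hab).2 (hint b))]

lemma lintegral_ofReal_max_sub_eq (μ : Measure ℝ) (x : ℝ) :
    ∫⁻ y, ENNReal.ofReal (max (y - x) 0) ∂μ = ∫⁻ t in Ioi x, μ (Ioi t) := by
  rw [lintegral_eq_lintegral_meas_lt μ (f := fun y ↦ max (y - x) 0)
    (ae_of_all _ fun y ↦ le_max_right _ _) (by fun_prop)]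
  have hlevel : ∀ t ∈ Ioi (0 : ℝ), μ {y | t < max (y - x) 0} = μ (Ioi (x + t)) := by
    intro t ht
    congr 1
    ext y
    simp only [mem_ofPred_eq, lt_max_iff, mem_Ioi, lt_sub_iff_add_lt',
      not_lt.2 (le_of_lt (mem_Ioi.1 ht)), or_false]
  rw [setLIntegral_congr_fun measurableSet_Ioi hlevel]
  simpa using (measurePreserving_add_left volume x).setLIntegral_comp_preimage_emb
    (measurableEmbedding_addLeft x) (fun t ↦ μ (Ioi t)) (Ioi x)

lemma ConvexOn.lintegral_max_sub_rightDerivStieltjes {f : ℝ → ℝ} (hf : ConvexOn ℝ univ f)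
    (htop : Tendsto f atTop (𝓝 0)) (x : ℝ) :
    ∫⁻ y, ENNReal.ofReal (max (y - x) 0) ∂hf.rightDerivStieltjes.measure =
      ENNReal.ofReal (f x) := by
  have hmono := hf.monotone_rightDeriv
  have hnonpos := hmono.ge_of_tendsto (hf.tendsto_rightDeriv_atTop htop)
  simp_rw [lintegral_ofReal_max_sub_eq, hf.measure_rightDerivStieltjes_Ioi htop]
  simpa using lintegral_Ioi_eq_ofReal_of_hasDerivWithinAt_Ioi (f := -f)
    hf.locallyLipschitz.continuous.neg.continuousOn
    (fun t _ ↦ (hf.hasDerivWithinAt_rightDeriv t).neg)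
    (fun b ↦ (hmono.intervalIntegrable (a := x) (b := b)).1.neg)
    (fun t _ ↦ neg_nonneg.2 (hnonpos t)) htop.neg

lemma integrable_and_integral_eq_of_lintegral_eq {α : Type*} [MeasurableSpace α]
    {μ : Measure α} {g : α → ℝ} (hg : 0 ≤ g) (hgm : AEStronglyMeasurable g μ) {c : ℝ}
    (hc : 0 ≤ c) (h : ∫⁻ a, ENNReal.ofReal (g a) ∂μ = ENNReal.ofReal c) :
    Integrable g μ ∧ ∫ a, g a ∂μ = c :=
  ⟨⟨hgm, (hasFiniteIntegral_iff_ofReal (ae_of_all _ hg)).2 (h ▸ ENNReal.ofReal_lt_top)⟩, by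
    rw [integral_eq_lintegral_of_nonneg_ae (ae_of_all _ hg) hgm, h, ENNReal.toReal_ofReal hc]⟩

lemma integrable_max_and_integral_max_eq {μ : Measure ℝ} [IsProbabilityMeasure μ] {x : ℝ}
    (h : Integrable (fun y ↦ max (y - x) 0) μ) :
    Integrable (fun y ↦ max y x) μ ∧ ∫ y, max y x ∂μ = ∫ y, max (y - x) 0 ∂μ + x := by
  have hmax (y : ℝ) : max (y - x) 0 + x = max y x := by
    rw [← eq_sub_iff_add_eq, ← max_sub_sub_right, sub_self]
  simp_rw [← hmax]
  exact ⟨h.add (integrable_const x), by rw [integral_add h (integrable_const x)]; simp⟩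

lemma tendsto_integral_max_atBot {μ : Measure ℝ} (hμ : Integrable (fun y ↦ y) μ) :
    Tendsto (fun x ↦ ∫ y, max y x ∂μ) atBot (𝓝 (∫ y, y ∂μ)) := by
  refine tendsto_integral_filter_of_dominated_convergence (fun y ↦ |y|)
    (.of_forall fun x ↦ (by fun_prop : Measurable fun y : ℝ ↦ max y x).aestronglyMeasurable)
    ?_ hμ.abs (ae_of_all _ fun y ↦ tendsto_const_nhds.congr' ?_)
  · filter_upwards [eventually_le_atBot 0] with x hx
    exact ae_of_all _ fun y ↦ abs_le.2 ⟨(neg_abs_le y).trans (le_max_left _ _),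
      max_le (le_abs_self y) (hx.trans (abs_nonneg y))⟩
  · filter_upwards [eventually_le_atBot y] with x hx
    exact (max_eq_left hx).symm

lemma integrable_of_tendsto_integral_max {μ : Measure ℝ} {m : ℝ}
    (hint : ∀ x, Integrable (fun y ↦ max y x) μ)
    (hlim : Tendsto (fun x ↦ ∫ y, max y x ∂μ) atBot (𝓝 m)) :
    Integrable (fun y ↦ y) μ := by
  have hneg : Integrable (fun y ↦ max y 0 - y) μ := by
    refine ⟨(hint 0).aestronglyMeasurable.sub measurable_id.aestronglyMeasurable, ?_⟩
    rw [hasFiniteIntegral_iff_ofReal (ae_of_all _ fun y ↦ sub_nonneg.2 (le_max_left y 0))]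
    have hpt (y : ℝ) : Tendsto (fun x ↦ ENNReal.ofReal (max y 0 - max y x)) atBot
        (𝓝 (ENNReal.ofReal (max y 0 - y))) :=
      tendsto_const_nhds.congr' <| by
        filter_upwards [eventually_le_atBot y] with x hx
        rw [max_eq_left hx]
    have hlint : Tendsto (fun x ↦ ∫⁻ y, ENNReal.ofReal (max y 0 - max y x) ∂μ) atBot
        (𝓝 (ENNReal.ofReal (∫ y, max y 0 ∂μ - m))) := by
      refine ENNReal.tendsto_ofReal (hlim.const_sub _) |>.congr' ?_
      filter_upwards [eventually_le_atBot 0] with x hx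
      rw [← integral_sub (hint 0) (hint x)]
      exact ofReal_integral_eq_lintegral_ofReal ((hint 0).sub (hint x))
        (ae_of_all _ fun y ↦ sub_nonneg.2 (max_le_max_left y hx))
    calc ∫⁻ y, ENNReal.ofReal (max y 0 - y) ∂μ
        = ∫⁻ y, liminf (fun x ↦ ENNReal.ofReal (max y 0 - max y x)) atBot ∂μ :=
          lintegral_congr fun y ↦ (hpt y).liminf_eq.symm
      _ ≤ liminf (fun x ↦ ∫⁻ y, ENNReal.ofReal (max y 0 - max y x) ∂μ) atBot :=
          lintegral_liminf_le' fun x ↦ (by fun_prop : Measurable _).aemeasurable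
      _ < ⊤ := by rw [hlint.liminf_eq]; exact ENNReal.ofReal_lt_top
  exact ((hint 0).sub hneg).congr (ae_of_all _ fun y ↦ sub_sub_cancel _ _)

lemma indicator_le_max_sub_sub_max_sub_le {x z y : ℝ} (hxz : x ≤ z) :
    (Ioi z).indicator (fun _ ↦ z - x) y ≤ max (y - x) 0 - max (y - z) 0 ∧
      max (y - x) 0 - max (y - z) 0 ≤ (Ioi x).indicator (fun _ ↦ z - x) y := by
  simp only [indicator_apply, mem_Ioi]
  constructor <;> split_ifs <;> simp only [max_def] <;> split_ifs <;> linarith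

lemma hasDerivWithinAt_integral_max_sub {μ : Measure ℝ} [IsProbabilityMeasure μ]
    (hμ : Integrable (fun y ↦ y) μ) (x : ℝ) :
    HasDerivWithinAt (fun x ↦ ∫ y, max (y - x) 0 ∂μ) (cdf μ x - 1) (Ioi x) x := by
  set P := fun x ↦ ∫ y, max (y - x) 0 ∂μ
  have hint (x : ℝ) : Integrable (fun y ↦ max (y - x) 0) μ :=
    (hμ.sub (integrable_const x)).pos_part
  have hIoi (z : ℝ) : μ.real (Ioi z) = 1 - cdf μ z := by
    rw [cdf_eq_real, ← probReal_compl_eq_one_sub measurableSet_Iic, compl_Iic]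
  have hbounds {z : ℝ} (hxz : x < z) :
      (z - x) * μ.real (Ioi z) ≤ P x - P z ∧ P x - P z ≤ (z - x) * μ.real (Ioi x) := by
    have hind (t : ℝ) :
        (z - x) * μ.real (Ioi t) = ∫ y, (Ioi t).indicator (fun _ ↦ z - x) y ∂μ := by
      rw [integral_indicator_const _ measurableSet_Ioi, smul_eq_mul, mul_comm]
    have hpt := fun y ↦ indicator_le_max_sub_sub_max_sub_le (y := y) hxz.le
    simp only [P, hind, ← integral_sub (hint x) (hint z)]
    exact ⟨integral_mono ((integrable_const _).indicator measurableSet_Ioi)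
        ((hint x).sub (hint z)) fun y ↦ (hpt y).1,
      integral_mono ((hint x).sub (hint z))
        ((integrable_const _).indicator measurableSet_Ioi) fun y ↦ (hpt y).2⟩
  rw [hasDerivWithinAt_iff_tendsto_slope, sdiff_singleton_eq_self self_notMem_Ioi]
  have hcdf : Tendsto (fun z ↦ cdf μ z - 1) (𝓝[>] x) (𝓝 (cdf μ x - 1)) :=
    (((cdf μ).right_continuous x).mono Ioi_subset_Ici_self).sub_const 1
  refine tendsto_of_tendsto_of_tendsto_of_le_of_le' tendsto_const_nhds hcdf ?_ ?_ <;>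
    filter_upwards [self_mem_nhdsWithin] with z (hz : x < z) <;>
    have := hbounds hz <;> rw [hIoi, hIoi] at this <;> rw [slope_def_field]
  · rw [le_div_iff₀ (sub_pos.2 hz)]
    linarith
  · rw [div_le_iff₀ (sub_pos.2 hz)]
    linarith

lemma eq_of_integral_max_sub_eq {μ ν : Measure ℝ} [IsProbabilityMeasure μ]
    [IsProbabilityMeasure ν] (hμ : Integrable (fun y ↦ y) μ) (hν : Integrable (fun y ↦ y) ν)
    (h : ∀ x, ∫ y, max (y - x) 0 ∂μ = ∫ y, max (y - x) 0 ∂ν) : μ = ν := by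
  refine Measure.eq_of_cdf μ ν (StieltjesFunction.ext fun x ↦ ?_)
  have hderiv := hasDerivWithinAt_integral_max_sub hν x
  simp only [← h] at hderiv
  linarith [(uniqueDiffWithinAt_Ioi x).eq_deriv _ (hasDerivWithinAt_integral_max_sub hμ x) hderiv]

/-- A convex nonnegative function `C` tending to `0` at `+∞` and with `C(x) + x → l` at `-∞`
is the integrated survival function of a unique integrable probability measure `ν`,
whose mean is `l`. -/
theorem exists_unique_measure_of_integratedSurvival (C : ℝ → ℝ) (l : ℝ)
    (hconv : ConvexOn ℝ Set.univ C)
    (hnonneg : ∀ x : ℝ, 0 ≤ C x)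
    (htop : Tendsto C atTop (nhds 0))
    (hbot : Tendsto (fun x => C x + x) atBot (nhds l)) :
    ∃! ν : Measure ℝ,
      IsProbabilityMeasure ν ∧
      Integrable (fun y : ℝ => y) ν ∧
      (∀ x : ℝ, C x = ∫ y, max (y - x) 0 ∂ν) ∧
      (∫ y, y ∂ν) = l := by
  set ν := hconv.rightDerivStieltjes.measure
  have hprob : IsProbabilityMeasure ν := hconv.isProbabilityMeasure_rightDerivStieltjes htop hbot
  have hcall (x : ℝ) : Integrable (fun y ↦ max (y - x) 0) ν ∧ ∫ y, max (y - x) 0 ∂ν = C x :=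
    integrable_and_integral_eq_of_lintegral_eq (fun _ ↦ le_max_right _ _)
      (by fun_prop : Measurable fun y : ℝ ↦ max (y - x) 0).aestronglyMeasurable (hnonneg x)
      (hconv.lintegral_max_sub_rightDerivStieltjes htop x)
  have hmax (x : ℝ) := integrable_max_and_integral_max_eq (hcall x).1
  have hlim : Tendsto (fun x ↦ ∫ y, max y x ∂ν) atBot (𝓝 l) :=
    hbot.congr fun x ↦ by rw [(hmax x).2, (hcall x).2]
  have hint : Integrable (fun y ↦ y) ν :=
    integrable_of_tendsto_integral_max (fun x ↦ (hmax x).1) hlim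
  refine ⟨ν, ⟨hprob, hint, fun x ↦ (hcall x).2.symm,
    tendsto_nhds_unique (tendsto_integral_max_atBot hint) hlim⟩, ?_⟩
  rintro μ ⟨hμ, hμint, hμC, -⟩
  exact eq_of_integral_max_sub_eq hμint hint fun x ↦ by rw [← hμC, (hcall x).2]
end

section
/- Let (X_t)_{t≥0} be a family of integrable real random variables with constant mean E[X_t] = m for all t. Then t ↦ E[ψ(X_t)] is non-decreasing for every convex ψ : ℝ → ℝ (with values in (-∞, +∞]) if and only if for every x ∈ ℝ the map t ↦ E[(X_t - x)⁺] is non-decreasing. -/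
open MeasureTheory Set Finset Filter Topology

/-!
Approximate `ψ` from below by the maximum `φₙ` of its supporting lines at the points of the grid
of mesh `1/n` in `[-n, n]`. Supporting lines at increasing points take over from one another in
order, so `φₙ` is an affine function plus a nonnegative combination of call payoffs
`y ↦ (y - b)⁺`; equal means and ordered call prices then give `E φₙ(X_s) ≤ E φₙ(X_t)`.
The tangent at `0` and `ψ` itself bound `φₙ` on both sides and `φₙ → ψ` pointwise, so dominated
convergence yields `E ψ(X_s) ≤ E ψ(X_t)`. The converse holds because call payoffs are convex.
-/

def supportLine (ψ c : ℝ → ℝ) (a y : ℝ) : ℝ := ψ a + c a * (y - a)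

lemma ConvexOn.supportLine_rightDeriv_le {ψ : ℝ → ℝ} (hψ : ConvexOn ℝ univ ψ) (a y : ℝ) :
    supportLine ψ (fun x => derivWithin ψ (Ioi x) x) a y ≤ ψ y := by
  have ha : a ∈ interior univ := by simp
  rcases lt_trichotomy a y with hay | rfl | hya
  · have := hψ.rightDeriv_le_slope_of_mem_interior ha (mem_univ y) hay
    rw [slope_def_field, le_div_iff₀ (sub_pos.2 hay)] at this
    simp only [supportLine]
    linarith
  · simp [supportLine]
  · have := (hψ.slope_le_leftDeriv_of_mem_interior (mem_univ y) ha hya).trans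
      (hψ.leftDeriv_le_rightDeriv_of_mem_interior ha)
    rw [slope_def_field, div_le_iff₀ (sub_pos.2 hya)] at this
    simp only [supportLine]
    linarith

section SupportLine

variable {ψ c : ℝ → ℝ}

lemma monotone_of_supportLine_le (hc : ∀ a y, supportLine ψ c a y ≤ ψ y) : Monotone c := by
  intro a b hab
  rcases hab.eq_or_lt with rfl | hlt
  · rfl
  have h₁ := hc a b
  have h₂ := hc b a
  simp only [supportLine] at h₁ h₂
  nlinarith

lemma monotoneOn_supportLine (hc : ∀ a y, supportLine ψ c a y ≤ ψ y) (y : ℝ) :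
    MonotoneOn (fun a => supportLine ψ c a y) (Iic y) := by
  intro a _ b (hby : b ≤ y) hab
  have h₁ := hc a b
  have h₂ : c a * (y - b) ≤ c b * (y - b) :=
    mul_le_mul_of_nonneg_right (monotone_of_supportLine_le hc hab) (sub_nonneg.2 hby)
  simp only [supportLine] at h₁ ⊢
  linarith

lemma antitoneOn_supportLine (hc : ∀ a y, supportLine ψ c a y ≤ ψ y) (y : ℝ) :
    AntitoneOn (fun a => supportLine ψ c a y) (Ici y) := by
  intro a (hya : y ≤ a) b _ hab
  have h₁ := hc b a
  have h₂ : c b * (y - a) ≤ c a * (y - a) :=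
    mul_le_mul_of_nonpos_right (monotone_of_supportLine_le hc hab) (sub_nonpos.2 hya)
  simp only [supportLine] at h₁ ⊢
  linarith

lemma sub_supportLine_le (hc : ∀ a y, supportLine ψ c a y ≤ ψ y) (a y : ℝ) :
    ψ y - supportLine ψ c a y ≤ (c a - c y) * (a - y) := by
  have := hc y a
  simp only [supportLine] at this ⊢
  linarith

lemma supportLine_sub_supportLine (a b y : ℝ) :
    supportLine ψ c b y - supportLine ψ c a y
      = (c b - c a) * y + (ψ b - c b * b - (ψ a - c a * a)) := by
  simp only [supportLine]
  ring

end SupportLine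

theorem Finset.sup'_range_eq_add_sum_posPart (a : ℕ → ℝ) (K : ℕ)
    (ha : ∀ i j, i < j → 0 < a (j + 1) - a j → 0 ≤ a (i + 1) - a i) :
    (range (K + 1)).sup' nonempty_range_add_one a
      = a 0 + ∑ i ∈ range K, max (a (i + 1) - a i) 0 := by
  induction K with
  | zero => simp
  | succ K ih =>
    rw [sum_range_succ, ← add_assoc, ← ih, sup'_congr _ range_add_one (fun _ _ => rfl),
      sup'_insert (H := nonempty_range_add_one)]
    set S := (range (K + 1)).sup' nonempty_range_add_one a
    rcases le_or_gt (a (K + 1) - a K) 0 with hK | hK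
    · have : a K ≤ S := le_sup' a (self_mem_range_succ K)
      rw [max_eq_right hK, add_zero, sup_eq_right.2 (by linarith)]
    · have hS : S = a K := by
        rw [ih, sum_congr rfl fun i hi => max_eq_left (ha i K (mem_range.1 hi) hK),
          sum_range_sub]
        ring
      rw [max_eq_left hK.le, hS, sup_eq_left.2 (by linarith)]
      ring

def supportEnvelope (ψ c : ℝ → ℝ) (p : ℕ → ℝ) (K : ℕ) (y : ℝ) : ℝ :=
  (range (K + 1)).sup' nonempty_range_add_one fun i => supportLine ψ c (p i) y

section SupportEnvelope

variable {ψ c : ℝ → ℝ} {p : ℕ → ℝ} {K : ℕ}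

lemma supportEnvelope_le (hc : ∀ a y, supportLine ψ c a y ≤ ψ y) (y : ℝ) :
    supportEnvelope ψ c p K y ≤ ψ y :=
  sup'_le _ _ fun i _ => hc (p i) y

lemma supportLine_le_supportEnvelope {i : ℕ} (hi : i ≤ K) (y : ℝ) :
    supportLine ψ c (p i) y ≤ supportEnvelope ψ c p K y :=
  le_sup' (fun i => supportLine ψ c (p i) y) (mem_range_succ_iff.2 hi)

lemma supportEnvelope_eq_add_sum (hc : ∀ a y, supportLine ψ c a y ≤ ψ y) (hp : Monotone p)
    (y : ℝ) :
    supportEnvelope ψ c p K y = supportLine ψ c (p 0) y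
      + ∑ i ∈ range K, max (supportLine ψ c (p (i + 1)) y - supportLine ψ c (p i) y) 0 := by
  refine sup'_range_eq_add_sum_posPart _ K fun i j hij hj => ?_
  have hpj : p j < y := by
    by_contra! hyp
    exact (sub_pos.1 hj).not_ge <|
      antitoneOn_supportLine hc y hyp (hyp.trans (hp j.le_succ)) (hp j.le_succ)
  have hpi : p (i + 1) ≤ y := (hp hij).trans hpj.le
  exact sub_nonneg.2 <| monotoneOn_supportLine hc y ((hp i.le_succ).trans hpi) hpi (hp i.le_succ)

end SupportEnvelope

section Integral

variable {Ω : Type*} [MeasurableSpace Ω] {μ : Measure Ω} {X Y : Ω → ℝ}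

lemma integral_max_affine_le
    (hcall : ∀ x, ∫ ω, max (X ω - x) 0 ∂μ ≤ ∫ ω, max (Y ω - x) 0 ∂μ)
    {γ : ℝ} (hγ : 0 ≤ γ) (δ : ℝ) :
    ∫ ω, max (γ * X ω + δ) 0 ∂μ ≤ ∫ ω, max (γ * Y ω + δ) 0 ∂μ := by
  rcases hγ.eq_or_lt with rfl | hγ
  · simp
  have hscale : ∀ y, max (γ * y + δ) 0 = γ * max (y - -δ / γ) 0 := fun y => by
    rw [mul_max_of_nonneg _ _ hγ.le, mul_zero, mul_sub, mul_div_cancel₀ _ hγ.ne']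
    ring_nf
  simp only [hscale, integral_const_mul]
  exact mul_le_mul_of_nonneg_left (hcall _) hγ.le

variable [IsFiniteMeasure μ] {ψ c : ℝ → ℝ} {p : ℕ → ℝ} {K : ℕ}

lemma integrable_supportLine_comp (hX : Integrable X μ) (a : ℝ) :
    Integrable (fun ω => supportLine ψ c a (X ω)) μ :=
  (integrable_const _).add ((hX.sub (integrable_const _)).const_mul _)

lemma integral_supportLine_comp_eq (hX : Integrable X μ) (hY : Integrable Y μ)
    (hmean : ∫ ω, X ω ∂μ = ∫ ω, Y ω ∂μ) (a : ℝ) :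
    ∫ ω, supportLine ψ c a (X ω) ∂μ = ∫ ω, supportLine ψ c a (Y ω) ∂μ := by
  have affine : ∀ {Z : Ω → ℝ}, Integrable Z μ → ∫ ω, supportLine ψ c a (Z ω) ∂μ
      = μ.real univ • ψ a + c a * (∫ ω, Z ω ∂μ - μ.real univ • a) := fun {Z} hZ => by
    have hZa : Integrable (fun ω => Z ω - a) μ := hZ.sub (integrable_const a)
    simp only [supportLine]
    rw [integral_add (integrable_const _) (hZa.const_mul _), integral_const_mul,
      integral_sub hZ (integrable_const a), integral_const, integral_const]
  rw [affine hX, affine hY, hmean]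

lemma integrable_supportEnvelope_comp (hc : ∀ a y, supportLine ψ c a y ≤ ψ y)
    (hp : Monotone p) (hX : Integrable X μ) :
    Integrable (fun ω => supportEnvelope ψ c p K (X ω)) μ := by
  simp only [supportEnvelope_eq_add_sum hc hp]
  exact (integrable_supportLine_comp hX _).add <| integrable_finsetSum _ fun i _ =>
    ((integrable_supportLine_comp hX _).sub (integrable_supportLine_comp hX _)).pos_part

lemma integral_supportEnvelope_comp_le (hc : ∀ a y, supportLine ψ c a y ≤ ψ y)
    (hp : Monotone p) (hX : Integrable X μ) (hY : Integrable Y μ)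
    (hmean : ∫ ω, X ω ∂μ = ∫ ω, Y ω ∂μ)
    (hcall : ∀ x, ∫ ω, max (X ω - x) 0 ∂μ ≤ ∫ ω, max (Y ω - x) 0 ∂μ) :
    ∫ ω, supportEnvelope ψ c p K (X ω) ∂μ ≤ ∫ ω, supportEnvelope ψ c p K (Y ω) ∂μ := by
  have hkink : ∀ {Z : Ω → ℝ}, Integrable Z μ → ∀ i, Integrable (fun ω =>
      max (supportLine ψ c (p (i + 1)) (Z ω) - supportLine ψ c (p i) (Z ω)) 0) μ :=
    fun hZ i => ((integrable_supportLine_comp hZ _).sub (integrable_supportLine_comp hZ _)).pos_part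
  simp only [supportEnvelope_eq_add_sum hc hp]
  rw [integral_add (integrable_supportLine_comp hX _)
      (integrable_finsetSum _ fun i _ => hkink hX i),
    integral_add (integrable_supportLine_comp hY _)
      (integrable_finsetSum _ fun i _ => hkink hY i),
    integral_finsetSum _ fun i _ => hkink hX i, integral_finsetSum _ fun i _ => hkink hY i,
    integral_supportLine_comp_eq hX hY hmean]
  refine add_le_add_right (sum_le_sum fun i _ => ?_) _
  simp only [supportLine_sub_supportLine]
  exact integral_max_affine_le hcall
    (sub_nonneg.2 (monotone_of_supportLine_le hc (hp i.le_succ))) _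

end Integral

lemma exists_grid_point_near {n : ℕ} (hn : 0 < n) {y : ℝ} (hy : |y| ≤ n) :
    ∃ i ≤ 2 * n ^ 2, y ≤ (i : ℝ) / n - n ∧ (i : ℝ) / n - n ≤ y + 1 / n := by
  have hn' : (0 : ℝ) < n := Nat.cast_pos.2 hn
  have hyn : 0 ≤ (y + n) * n := mul_nonneg (by linarith [neg_abs_le y]) hn'.le
  refine ⟨⌈(y + n) * n⌉₊, Nat.ceil_le.2 ?_, ?_, ?_⟩
  · push_cast
    nlinarith [le_abs_self y]
  · rw [le_sub_iff_add_le, le_div_iff₀ hn']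
    exact Nat.le_ceil _
  · rw [sub_le_iff_le_add, div_le_iff₀ hn']
    have hstep : (y + 1 / n + n) * n = (y + n) * n + 1 := by
      field_simp
      ring
    linarith [Nat.ceil_lt_add_one hyn]

lemma tendsto_supportEnvelope_grid {ψ c : ℝ → ℝ} (hc : ∀ a y, supportLine ψ c a y ≤ ψ y)
    (y : ℝ) :
    Tendsto (fun n : ℕ => supportEnvelope ψ c (fun i => (i : ℝ) / n - n) (2 * n ^ 2) y) atTop
      (𝓝 (ψ y)) := by
  have hlow : Tendsto (fun n : ℕ => ψ y - (c (y + 1) - c y) * (1 / n)) atTop (𝓝 (ψ y)) := by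
    simpa using (tendsto_const_nhds (x := ψ y)).sub
      ((tendsto_one_div_atTop_nhds_zero_nat (𝕜 := ℝ)).const_mul (c (y + 1) - c y))
  refine tendsto_of_tendsto_of_tendsto_of_le_of_le' hlow tendsto_const_nhds ?_
    (Eventually.of_forall fun n => supportEnvelope_le hc y)
  filter_upwards [eventually_ge_atTop (⌈|y|⌉₊ + 1)] with n hn
  have hn0 : 0 < n := by omega
  have hyn : |y| ≤ n := (Nat.le_ceil _).trans (by exact_mod_cast (by omega : ⌈|y|⌉₊ ≤ n))
  obtain ⟨i, hi, hyi, hiy⟩ := exists_grid_point_near hn0 hyn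
  have h1n : 1 / (n : ℝ) ≤ 1 := by
    rw [div_le_one (Nat.cast_pos.2 hn0)]
    exact_mod_cast hn0
  have hcmono := monotone_of_supportLine_le hc
  have hgap : (c ((i : ℝ) / n - n) - c y) * ((i : ℝ) / n - n - y) ≤ (c (y + 1) - c y) * (1 / n) :=
    mul_le_mul (sub_le_sub_right (hcmono (by linarith)) _) (by linarith) (sub_nonneg.2 hyi)
      (sub_nonneg.2 (hcmono (by linarith)))
  linarith [sub_supportLine_le hc ((i : ℝ) / n - n) y,
    supportLine_le_supportEnvelope (ψ := ψ) (c := c) (p := fun i : ℕ => (i : ℝ) / n - n) hi y]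

theorem ConvexOn.integral_comp_le_of_integral_max_sub_le {Ω : Type*} [MeasurableSpace Ω]
    {μ : Measure Ω} [IsFiniteMeasure μ] {X Y : Ω → ℝ} {ψ : ℝ → ℝ} (hψ : ConvexOn ℝ univ ψ)
    (hX : Integrable X μ) (hY : Integrable Y μ) (hmean : ∫ ω, X ω ∂μ = ∫ ω, Y ω ∂μ)
    (hcall : ∀ x, ∫ ω, max (X ω - x) 0 ∂μ ≤ ∫ ω, max (Y ω - x) 0 ∂μ)
    (hψX : Integrable (fun ω => ψ (X ω)) μ) (hψY : Integrable (fun ω => ψ (Y ω)) μ) :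
    ∫ ω, ψ (X ω) ∂μ ≤ ∫ ω, ψ (Y ω) ∂μ := by
  set c : ℝ → ℝ := fun x => derivWithin ψ (Ioi x) x
  have hc : ∀ a y, supportLine ψ c a y ≤ ψ y := hψ.supportLine_rightDeriv_le
  set φ : ℕ → ℝ → ℝ := fun n => supportEnvelope ψ c (fun i => (i : ℝ) / n - n) (2 * n ^ 2)
  have hgrid : ∀ n : ℕ, Monotone fun i : ℕ => (i : ℝ) / n - n := fun n i j hij => by
    change (i : ℝ) / n - n ≤ (j : ℝ) / n - n
    gcongr
  have hφint : ∀ {Z : Ω → ℝ}, Integrable Z μ → ∀ n, Integrable (fun ω => φ n (Z ω)) μ :=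
    fun hZ n => integrable_supportEnvelope_comp hc (hgrid n) hZ
  -- `0` is the grid point of index `n ^ 2`, so the tangent at `0` is a uniform lower bound.
  have hφ_ge : ∀ n y, supportLine ψ c 0 y ≤ φ n y := fun n y => by
    have h0 : (n : ℝ) ^ 2 / n - n = 0 := by
      rcases n.eq_zero_or_pos with rfl | hn
      · simp
      · field_simp
        ring
    have h := supportLine_le_supportEnvelope (ψ := ψ) (c := c)
      (p := fun i : ℕ => (i : ℝ) / n - n) (by omega : n ^ 2 ≤ 2 * n ^ 2) y
    rwa [Nat.cast_pow, h0] at h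
  have hlim : Tendsto (fun n => ∫ ω, φ n (X ω) ∂μ) atTop (𝓝 (∫ ω, ψ (X ω) ∂μ)) := by
    refine tendsto_integral_of_dominated_convergence
      (fun ω => |ψ (X ω)| + |supportLine ψ c 0 (X ω)|) (fun n => (hφint hX n).1)
      (hψX.abs.add (integrable_supportLine_comp hX 0).abs) (fun n => ae_of_all _ fun ω => ?_)
      (ae_of_all _ fun ω => tendsto_supportEnvelope_grid hc (X ω))
    rw [Real.norm_eq_abs, abs_le]
    have hle : φ n (X ω) ≤ ψ (X ω) := supportEnvelope_le hc (X ω)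
    constructor <;> linarith [hφ_ge n (X ω), le_abs_self (ψ (X ω)), neg_abs_le (ψ (X ω)),
      le_abs_self (supportLine ψ c 0 (X ω)), neg_abs_le (supportLine ψ c 0 (X ω))]
  refine le_of_tendsto' hlim fun n => ?_
  calc ∫ ω, φ n (X ω) ∂μ ≤ ∫ ω, φ n (Y ω) ∂μ :=
        integral_supportEnvelope_comp_le hc (hgrid n) hX hY hmean hcall
    _ ≤ ∫ ω, ψ (Y ω) ∂μ :=
        integral_mono (hφint hY n) hψY fun ω => supportEnvelope_le hc (Y ω)

lemma convexOn_max_sub_zero (x : ℝ) : ConvexOn ℝ univ fun y : ℝ => max (y - x) 0 :=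
  ((convexOn_id convex_univ).sub (concaveOn_const x convex_univ)).sup (convexOn_const 0 convex_univ)

theorem peacock_iff_call_monotone_general {Ω : Type*} [MeasurableSpace Ω]
    (P : Measure Ω) [IsProbabilityMeasure P]
    (X : ℝ → Ω → ℝ) (m : ℝ)
    (hint : ∀ t, 0 ≤ t → Integrable (X t) P)
    (hmean : ∀ t, 0 ≤ t → (∫ ω, X t ω ∂P) = m) :
    (∀ ψ : ℝ → ℝ, ConvexOn ℝ Set.univ ψ →
        (∀ t, 0 ≤ t → Integrable (fun ω => ψ (X t ω)) P) →
        (∀ s t, 0 ≤ s → s ≤ t →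
          (∫ ω, ψ (X s ω) ∂P) ≤ ∫ ω, ψ (X t ω) ∂P)) ↔
    (∀ x : ℝ, ∀ s t, 0 ≤ s → s ≤ t →
        (∫ ω, max (X s ω - x) 0 ∂P) ≤ ∫ ω, max (X t ω - x) 0 ∂P) := by
  constructor
  · intro hconvex x
    exact hconvex _ (convexOn_max_sub_zero x) fun t ht =>
      ((hint t ht).sub (integrable_const x)).pos_part
  · intro hcall ψ hψ hψint s t hs hst
    have ht : 0 ≤ t := hs.trans hst
    exact hψ.integral_comp_le_of_integral_max_sub_le (hint s hs) (hint t ht)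
      ((hmean s hs).trans (hmean t ht).symm) (fun x => hcall x s t hs hst) (hψint s hs)
      (hψint t ht)

/-- For a family of integrable random variables with constant mean, the expectation
`t ↦ E[ψ(X_t)]` is non-decreasing for every convex `ψ` (whenever these expectations are
defined) if and only if `t ↦ E[(X_t - x)⁺]` is non-decreasing for every `x ∈ ℝ`. -/
theorem peacock_iff_call_monotone {Ω : Type*} [MeasurableSpace Ω]
    (P : Measure Ω) [IsProbabilityMeasure P]
    (X : ℝ → Ω → ℝ) (m : ℝ)
    (hmeas : ∀ t, 0 ≤ t → Measurable (X t))
    (hint : ∀ t, 0 ≤ t → Integrable (X t) P)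
    (hmean : ∀ t, 0 ≤ t → (∫ ω, X t ω ∂P) = m) :
    (∀ ψ : ℝ → ℝ, ConvexOn ℝ Set.univ ψ →
        (∀ t, 0 ≤ t → Integrable (fun ω => ψ (X t ω)) P) →
        (∀ s t, 0 ≤ s → s ≤ t →
          (∫ ω, ψ (X s ω) ∂P) ≤ ∫ ω, ψ (X t ω) ∂P)) ↔
    (∀ x : ℝ, ∀ s t, 0 ≤ s → s ≤ t →
        (∫ ω, max (X s ω - x) 0 ∂P) ≤ ∫ ω, max (X t ω - x) 0 ∂P) :=
  peacock_iff_call_monotone_general P X m hint hmean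
end

section
/- Let I, J be intervals of ℝ (or subsets of ℤ) and p : I × J → ℝ≥0. Then p is totally positive of order 2 (i.e., p(x₁,y₁)p(x₂,y₂) ≥ p(x₁,y₂)p(x₂,y₁) for all x₁ ≤ x₂ in I, y₁ ≤ y₂ in J) if and only if the set D = {(x,y) : p(x,y) > 0} is a sublattice of I × J and p is TP₂ on D. -/
/-!
For `x₁ < x₂`, `y₁ < y₂` the TP₂ inequality bounds `p x₁ y₂ * p x₂ y₁` by the nonnegative product
`p x₁ y₁ * p x₂ y₂`; so positivity of the off-diagonal corners forces positivity of the diagonal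
ones, which is the sublattice property. Conversely, if an off-diagonal corner vanishes the
inequality is `0 ≤ p x₁ y₁ * p x₂ y₂`; otherwise the sublattice property puts all four corners in
`D`. When `x₁ = x₂` or `y₁ = y₂` both sides coincide.
-/

section CrossProduct

variable {R : Type*} [CommSemiring R] [LinearOrder R] [IsStrictOrderedRing R] {a b c d : R}

theorem pos_and_pos_of_mul_pos_le_mul (ha : 0 ≤ a) (hd : 0 ≤ d) (hbc : 0 < b * c)
    (h : b * c ≤ a * d) : 0 < a ∧ 0 < d :=
  have had : 0 < a * d := hbc.trans_le h
  ⟨pos_of_mul_pos_left had hd, pos_of_mul_pos_right had ha⟩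

theorem mul_le_mul_of_pos_imp (ha : 0 ≤ a) (hb : 0 ≤ b) (hc : 0 ≤ c) (hd : 0 ≤ d)
    (hsupp : 0 < b → 0 < c → 0 < a ∧ 0 < d)
    (hpos : 0 < a → 0 < b → 0 < c → 0 < d → b * c ≤ a * d) : b * c ≤ a * d := by
  rcases hb.eq_or_lt with rfl | hb'
  · simpa using mul_nonneg ha hd
  rcases hc.eq_or_lt with rfl | hc'
  · simpa using mul_nonneg ha hd
  obtain ⟨ha', hd'⟩ := hsupp hb' hc'
  exact hpos ha' hb' hc' hd'

end CrossProduct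

/-- A nonnegative kernel `p` on `I × J` is totally positive of order 2 if and only if
its positivity set `D = {(x,y) : p x y > 0}` is a sublattice of `I × J` and `p` is
TP₂ on `D`. -/
theorem tp2_iff_sublattice_and_tp2_on_pos (I J : Set ℝ) (p : ℝ → ℝ → ℝ)
    (hnonneg : ∀ x ∈ I, ∀ y ∈ J, 0 ≤ p x y) :
    (∀ x₁ ∈ I, ∀ x₂ ∈ I, ∀ y₁ ∈ J, ∀ y₂ ∈ J, x₁ ≤ x₂ → y₁ ≤ y₂ →
        p x₁ y₂ * p x₂ y₁ ≤ p x₁ y₁ * p x₂ y₂) ↔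
    ((∀ x₁ ∈ I, ∀ x₂ ∈ I, ∀ y₁ ∈ J, ∀ y₂ ∈ J, x₁ < x₂ → y₁ < y₂ →
        0 < p x₁ y₂ → 0 < p x₂ y₁ → 0 < p x₁ y₁ ∧ 0 < p x₂ y₂) ∧
      (∀ x₁ ∈ I, ∀ x₂ ∈ I, ∀ y₁ ∈ J, ∀ y₂ ∈ J, x₁ ≤ x₂ → y₁ ≤ y₂ →
        0 < p x₁ y₁ → 0 < p x₁ y₂ → 0 < p x₂ y₁ → 0 < p x₂ y₂ →
        p x₁ y₂ * p x₂ y₁ ≤ p x₁ y₁ * p x₂ y₂)) := by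
  constructor
  · intro htp
    refine ⟨fun x₁ hx₁ x₂ hx₂ y₁ hy₁ y₂ hy₂ hx hy h12 h21 => ?_,
      fun x₁ hx₁ x₂ hx₂ y₁ hy₁ y₂ hy₂ hx hy _ _ _ _ => htp x₁ hx₁ x₂ hx₂ y₁ hy₁ y₂ hy₂ hx hy⟩
    exact pos_and_pos_of_mul_pos_le_mul (hnonneg x₁ hx₁ y₁ hy₁) (hnonneg x₂ hx₂ y₂ hy₂)
      (mul_pos h12 h21) (htp x₁ hx₁ x₂ hx₂ y₁ hy₁ y₂ hy₂ hx.le hy.le)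
  · rintro ⟨hlat, htp⟩ x₁ hx₁ x₂ hx₂ y₁ hy₁ y₂ hy₂ hx hy
    rcases hx.eq_or_lt with rfl | hx'
    · rw [mul_comm]
    rcases hy.eq_or_lt with rfl | hy'
    · rw [mul_comm]
    exact mul_le_mul_of_pos_imp (hnonneg x₁ hx₁ y₁ hy₁) (hnonneg x₁ hx₁ y₂ hy₂)
      (hnonneg x₂ hx₂ y₁ hy₁) (hnonneg x₂ hx₂ y₂ hy₂)
      (hlat x₁ hx₁ x₂ hx₂ y₁ hy₁ y₂ hy₂ hx' hy')
      (htp x₁ hx₁ x₂ hx₂ y₁ hy₁ y₂ hy₂ hx hy)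
end

section
/- Let I, J, K be intervals of ℝ (or subsets of ℤ), σ a positive measure on J, and p : I × J → ℝ≥0, q : J × K → ℝ≥0 two TP₂ functions such that r(x,z) = ∫_J p(x,y) q(y,z) σ(dy) is finite for all (x,z) ∈ I × K. Then r is TP₂ on I × K. -/
/-!
Fix `x₁ ≤ x₂` and `z₁ ≤ z₂` and write `fᵢⱼ y = p xᵢ y * q y zⱼ`. For `y, y'` in `J` the product
of the minors `(p x₁ y p x₂ y' - p x₁ y' p x₂ y) (q y z₁ q y' z₂ - q y z₂ q y' z₁)` is
nonnegative (for `y ≤ y'` both factors are `≥ 0`, for `y' ≤ y` both are `≤ 0`), and it expands to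
`f₁₁ y f₂₂ y' + f₂₂ y f₁₁ y' - f₁₂ y f₂₁ y' - f₂₁ y f₁₂ y'`. Integrating in `y` and then in `y'`
gives `2 (r₁₁ r₂₂ - r₁₂ r₂₁) ≥ 0`; only integrals of functions of one variable times constants
occur, so no Fubini theorem is needed.
-/

open MeasureTheory Set

def IsTP2 {α β : Type*} [Preorder α] [Preorder β] (s : Set α) (t : Set β) (f : α → β → ℝ) :
    Prop :=
  ∀ x₁ ∈ s, ∀ x₂ ∈ s, ∀ y₁ ∈ t, ∀ y₂ ∈ t, x₁ ≤ x₂ → y₁ ≤ y₂ →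
    f x₁ y₂ * f x₂ y₁ ≤ f x₁ y₁ * f x₂ y₂

section SetIntegral

variable {α : Type*} [MeasurableSpace α] {μ : Measure α} {s : Set α}

/-- `s` need not be measurable: the exceptional set `{g < f}` is null-measurable and misses `s`. -/
theorem ae_restrict_le_of_forall_mem {f g : α → ℝ} (hf : AEStronglyMeasurable f (μ.restrict s))
    (hg : AEStronglyMeasurable g (μ.restrict s)) (h : ∀ x ∈ s, f x ≤ g x) :
    f ≤ᵐ[μ.restrict s] g := by
  have hbad : NullMeasurableSet {x | ¬f x ≤ g x} (μ.restrict s) := by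
    simpa using hg.nullMeasurableSet_lt hf
  rw [Filter.EventuallyLE, ae_iff, Measure.restrict_apply₀ hbad]
  convert measure_empty (μ := μ)
  ext x
  simpa using fun hx hs => (h x hs).not_gt hx

theorem setIntegral_mono_of_forall_mem {f g : α → ℝ} (hf : IntegrableOn f s μ)
    (hg : IntegrableOn g s μ) (h : ∀ x ∈ s, f x ≤ g x) :
    ∫ x in s, f x ∂μ ≤ ∫ x in s, g x ∂μ :=
  integral_mono_ae hf hg (ae_restrict_le_of_forall_mem hf.1 hg.1 h)

theorem setIntegral_mul_setIntegral_le_of_forall_mem {a b c d : α → ℝ} (ha : IntegrableOn a s μ)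
    (hb : IntegrableOn b s μ) (hc : IntegrableOn c s μ) (hd : IntegrableOn d s μ)
    (h : ∀ y ∈ s, ∀ y' ∈ s, b y * c y' + c y * b y' ≤ a y * d y' + d y * a y') :
    (∫ y in s, b y ∂μ) * (∫ y in s, c y ∂μ) ≤ (∫ y in s, a y ∂μ) * (∫ y in s, d y ∂μ) := by
  set A := ∫ y in s, a y ∂μ
  set B := ∫ y in s, b y ∂μ
  set C := ∫ y in s, c y ∂μ
  set D := ∫ y in s, d y ∂μ
  have inner : ∀ y' ∈ s, B * c y' + C * b y' ≤ A * d y' + D * a y' := by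
    intro y' hy'
    have : ∫ y in s, (b y * c y' + c y * b y') ∂μ ≤ ∫ y in s, (a y * d y' + d y * a y') ∂μ :=
      setIntegral_mono_of_forall_mem ((hb.mul_const _).add (hc.mul_const _))
        ((ha.mul_const _).add (hd.mul_const _)) fun y hy => h y hy y' hy'
    rw [integral_add (hb.mul_const _) (hc.mul_const _), integral_add (ha.mul_const _)
      (hd.mul_const _), integral_mul_const, integral_mul_const, integral_mul_const,
      integral_mul_const] at this
    linarith
  have outer : ∫ y' in s, (B * c y' + C * b y') ∂μ ≤ ∫ y' in s, (A * d y' + D * a y') ∂μ :=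
    setIntegral_mono_of_forall_mem ((hc.const_mul _).add (hb.const_mul _))
      ((hd.const_mul _).add (ha.const_mul _)) inner
  rw [integral_add (hc.const_mul _) (hb.const_mul _), integral_add (hd.const_mul _)
    (ha.const_mul _), integral_const_mul, integral_const_mul, integral_const_mul,
    integral_const_mul] at outer
  linarith

end SetIntegral

namespace IsTP2

variable {α β γ : Type*} [LinearOrder α] [LinearOrder β] [LinearOrder γ] {s : Set α} {t : Set β}
  {u : Set γ} {p : α → β → ℝ} {q : β → γ → ℝ}

theorem congr {f g : α → β → ℝ} (hf : IsTP2 s t f) (hfg : ∀ x ∈ s, ∀ y ∈ t, f x y = g x y) :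
    IsTP2 s t g := by
  intro x₁ hx₁ x₂ hx₂ y₁ hy₁ y₂ hy₂ hx hy
  simpa only [hfg _ hx₁ _ hy₁, hfg _ hx₁ _ hy₂, hfg _ hx₂ _ hy₁, hfg _ hx₂ _ hy₂] using
    hf x₁ hx₁ x₂ hx₂ y₁ hy₁ y₂ hy₂ hx hy

theorem minor_mul_minor_nonneg (hp : IsTP2 s t p) (hq : IsTP2 t u q) {x₁ x₂ : α} {z₁ z₂ : γ}
    {y y' : β} (hx₁ : x₁ ∈ s) (hx₂ : x₂ ∈ s) (hz₁ : z₁ ∈ u) (hz₂ : z₂ ∈ u) (hy : y ∈ t)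
    (hy' : y' ∈ t) (hx : x₁ ≤ x₂) (hz : z₁ ≤ z₂) :
    0 ≤ (p x₁ y * p x₂ y' - p x₁ y' * p x₂ y) * (q y z₁ * q y' z₂ - q y z₂ * q y' z₁) := by
  rcases le_total y y' with h | h
  · exact mul_nonneg (sub_nonneg.2 (hp x₁ hx₁ x₂ hx₂ y hy y' hy' hx h))
      (sub_nonneg.2 (hq y hy y' hy' z₁ hz₁ z₂ hz₂ h hz))
  · exact mul_nonneg_of_nonpos_of_nonpos (by linarith [hp x₁ hx₁ x₂ hx₂ y' hy' y hy hx h])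
      (by linarith [hq y' hy' y hy z₁ hz₁ z₂ hz₂ h hz])

theorem setIntegral_comp [MeasurableSpace β] {μ : Measure β} (hp : IsTP2 s t p)
    (hq : IsTP2 t u q) (hint : ∀ x ∈ s, ∀ z ∈ u, IntegrableOn (fun y => p x y * q y z) t μ) :
    IsTP2 s u fun x z => ∫ y in t, p x y * q y z ∂μ := by
  intro x₁ hx₁ x₂ hx₂ z₁ hz₁ z₂ hz₂ hx hz
  refine setIntegral_mul_setIntegral_le_of_forall_mem (hint x₁ hx₁ z₁ hz₁) (hint x₁ hx₁ z₂ hz₂)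
    (hint x₂ hx₂ z₁ hz₁) (hint x₂ hx₂ z₂ hz₂) fun y hy y' hy' => ?_
  linear_combination hp.minor_mul_minor_nonneg hq hx₁ hx₂ hz₁ hz₂ hy hy' hx hz

end IsTP2

theorem tp2_composition_general (I J K : Set ℝ) (σ : Measure ℝ)
    (p q : ℝ → ℝ → ℝ)
    (hp : ∀ x₁ ∈ I, ∀ x₂ ∈ I, ∀ y₁ ∈ J, ∀ y₂ ∈ J, x₁ ≤ x₂ → y₁ ≤ y₂ →
        p x₁ y₂ * p x₂ y₁ ≤ p x₁ y₁ * p x₂ y₂)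
    (hq : ∀ y₁ ∈ J, ∀ y₂ ∈ J, ∀ z₁ ∈ K, ∀ z₂ ∈ K, y₁ ≤ y₂ → z₁ ≤ z₂ →
        q y₁ z₂ * q y₂ z₁ ≤ q y₁ z₁ * q y₂ z₂)
    (hint : ∀ x ∈ I, ∀ z ∈ K, IntegrableOn (fun y => p x y * q y z) J σ)
    (r : ℝ → ℝ → ℝ)
    (hr : ∀ x ∈ I, ∀ z ∈ K, r x z = ∫ y in J, p x y * q y z ∂σ) :
    ∀ x₁ ∈ I, ∀ x₂ ∈ I, ∀ z₁ ∈ K, ∀ z₂ ∈ K, x₁ ≤ x₂ → z₁ ≤ z₂ →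
      r x₁ z₂ * r x₂ z₁ ≤ r x₁ z₁ * r x₂ z₂ :=
  (IsTP2.setIntegral_comp hp hq hint).congr fun x hx z hz => (hr x hx z hz).symm

/-- Basic composition formula: the product `r(x,z) = ∫_J p(x,y) q(y,z) σ(dy)` of two
TP₂ kernels is TP₂. -/
theorem tp2_composition (I J K : Set ℝ) (σ : Measure ℝ)
    (p q : ℝ → ℝ → ℝ)
    (hp_nonneg : ∀ x ∈ I, ∀ y ∈ J, 0 ≤ p x y)
    (hq_nonneg : ∀ y ∈ J, ∀ z ∈ K, 0 ≤ q y z)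
    (hp : ∀ x₁ ∈ I, ∀ x₂ ∈ I, ∀ y₁ ∈ J, ∀ y₂ ∈ J, x₁ ≤ x₂ → y₁ ≤ y₂ →
        p x₁ y₂ * p x₂ y₁ ≤ p x₁ y₁ * p x₂ y₂)
    (hq : ∀ y₁ ∈ J, ∀ y₂ ∈ J, ∀ z₁ ∈ K, ∀ z₂ ∈ K, y₁ ≤ y₂ → z₁ ≤ z₂ →
        q y₁ z₂ * q y₂ z₁ ≤ q y₁ z₁ * q y₂ z₂)
    (hint : ∀ x ∈ I, ∀ z ∈ K, IntegrableOn (fun y => p x y * q y z) J σ)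
    (r : ℝ → ℝ → ℝ)
    (hr : ∀ x ∈ I, ∀ z ∈ K, r x z = ∫ y in J, p x y * q y z ∂σ) :
    ∀ x₁ ∈ I, ∀ x₂ ∈ I, ∀ z₁ ∈ K, ∀ z₂ ∈ K, x₁ ≤ x₂ → z₁ ≤ z₂ →
      r x₁ z₂ * r x₂ z₁ ≤ r x₁ z₁ * r x₂ z₂ :=
  tp2_composition_general I J K σ p q hp hq hint r hr
end

section
/- If p, q : ℝ → ℝ≥0 are integrable log-concave functions, then their convolution r = p ∗ q, r(x) = ∫ p(x-y) q(y) dy, is log-concave. -/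
open MeasureTheory Set
open scoped Pointwise ENNReal

/-!
Log-concavity of `p` and `q` makes `(x, y) ↦ p (x - y) * q y` jointly log-concave, so its sections
at `a`, `b` and `l a + (1 - l) b` satisfy the hypothesis of the Prékopa–Leindler inequality, whose
conclusion is the log-concavity of `r` at these points.

On `ℝ`, Prékopa–Leindler reduces, after rescaling `f` and `g` to supremum `1` and using AM–GM, to
`l ∫ f + (1 - l) ∫ g ≤ ∫ h`; by the layer cake formula this is the integral over `t ∈ (0, 1)` of
the one-dimensional Brunn–Minkowski inequality `l |A| + (1 - l) |B| ≤ |l A + (1 - l) B|` for the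
superlevel sets at height `t`. The rescaling needs `p` and `q` bounded, which holds for every
integrable log-concave function: where `p x` exceeds `p u`, log-concavity gives `p ≥ √(p x p u)`
on the half of the segment `[u, x]` next to `x`.
-/

def IsLogConcave (f : ℝ → ℝ) : Prop :=
  ∀ a b l : ℝ, 0 ≤ l → l ≤ 1 → f a ^ l * f b ^ (1 - l) ≤ f (l * a + (1 - l) * b)

theorem sqrt_mul_le_rpow_mul_rpow {a b t : ℝ} (hb : 0 ≤ b) (hba : b ≤ a) (ht : 1 / 2 ≤ t) :
    √(a * b) ≤ a ^ t * b ^ (1 - t) := by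
  have ha : 0 ≤ a := hb.trans hba
  calc √(a * b) = a ^ (1 / 2 : ℝ) * (b ^ (t - 1 / 2) * b ^ (1 - t)) := by
        rw [← Real.rpow_add' hb (by norm_num), Real.sqrt_mul ha, Real.sqrt_eq_rpow,
          Real.sqrt_eq_rpow]
        congr 2
        ring
    _ ≤ a ^ (1 / 2 : ℝ) * (a ^ (t - 1 / 2) * b ^ (1 - t)) := by
        gcongr
    _ = a ^ t * b ^ (1 - t) := by
        rw [← mul_assoc, ← Real.rpow_add' ha (by linarith)]
        ring_nf

section LogConcave

variable {p : ℝ → ℝ}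

theorem IsLogConcave.sqrt_mul_le_of_mem_uIcc (hp0 : ∀ x, 0 ≤ p x) (hp : IsLogConcave p)
    {x u z : ℝ} (hux : p u ≤ p x) (hz : z ∈ uIcc ((x + u) / 2) x) :
    √(p x * p u) ≤ p z := by
  rw [← segment_eq_uIcc] at hz
  obtain ⟨α, β, hα, hβ, hαβ, rfl⟩ := hz
  have hcomb : α • ((x + u) / 2) + β • x = (1 - α / 2) * x + (1 - (1 - α / 2)) * u := by
    simp only [smul_eq_mul]
    linear_combination x * hαβ
  rw [hcomb]
  exact (sqrt_mul_le_rpow_mul_rpow (hp0 u) hux (by linarith)).trans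
    (hp x u _ (by linarith) (by linarith))

theorem IsLogConcave.abs_sub_mul_sqrt_le_integral (hp0 : ∀ x, 0 ≤ p x) (hint : Integrable p)
    (hp : IsLogConcave p) {x u : ℝ} (hux : p u ≤ p x) :
    |x - u| / 2 * √(p x * p u) ≤ ∫ z, p z :=
  calc |x - u| / 2 * √(p x * p u) = √(p x * p u) * volume.real (uIcc ((x + u) / 2) x) := by
        rw [Real.volume_real_interval, mul_comm, show x - (x + u) / 2 = (x - u) / 2 by ring,
          abs_div, abs_two]
    _ ≤ ∫ z in uIcc ((x + u) / 2) x, p z :=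
        setIntegral_ge_of_const_le_real measurableSet_uIcc (by simp [Real.volume_interval])
          (fun _ hz => hp.sqrt_mul_le_of_mem_uIcc hp0 hux hz) hint.integrableOn
    _ ≤ ∫ z, p z := setIntegral_le_integral hint (.of_forall hp0)

theorem bddAbove_range_of_subsingleton_pos {α : Type*} {f : α → ℝ}
    (h : {x | 0 < f x}.Subsingleton) : BddAbove (range f) := by
  refine ((h.image f).finite.bddAbove.union (bddAbove_Iic (a := 0))).mono ?_
  rintro _ ⟨x, rfl⟩
  by_cases hx : 0 < f x
  · exact Or.inl (mem_image_of_mem f hx)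
  · exact Or.inr (not_lt.1 hx)

/-- Two points `y ≠ w` where `p` is positive give a lower bound `|y - w| / 2` for the length of
the segment in `abs_sub_mul_sqrt_le_integral`. -/
theorem IsLogConcave.bddAbove_range (hp0 : ∀ x, 0 ≤ p x) (hint : Integrable p)
    (hp : IsLogConcave p) : BddAbove (range p) := by
  by_cases hs : {x | 0 < p x}.Subsingleton
  · exact bddAbove_range_of_subsingleton_pos hs
  obtain ⟨y, hy : 0 < p y, w, hw : 0 < p w, hyw⟩ := not_subsingleton_iff.1 hs
  have hd : 0 < |y - w| := abs_pos.2 (sub_ne_zero.2 hyw)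
  have hm : 0 < min (p y) (p w) := lt_min hy hw
  refine ⟨max (max (p y) (p w)) (((4 * ∫ z, p z) / |y - w|) ^ 2 / min (p y) (p w)), ?_⟩
  rintro _ ⟨x, rfl⟩
  obtain ⟨u, hmu, hu, hdu⟩ : ∃ u, min (p y) (p w) ≤ p u ∧ p u ≤ max (p y) (p w) ∧
      |y - w| / 2 ≤ |x - u| := by
    rcases le_total (|y - w| / 2) |x - y| with h | h
    · exact ⟨y, min_le_left _ _, le_max_left _ _, h⟩
    · refine ⟨w, min_le_right _ _, le_max_right _ _, ?_⟩
      linarith [abs_sub_le y x w, abs_sub_comm y x]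
  rcases le_or_gt (p x) (p u) with hxu | hux
  · exact le_max_of_le_left (hxu.trans hu)
  have hint0 : 0 ≤ ∫ z, p z := integral_nonneg hp0
  refine le_max_of_le_right ((le_div_iff₀ hm).2 ((Real.sqrt_le_left (by positivity)).1 ?_))
  rw [le_div_iff₀ hd]
  calc √(p x * min (p y) (p w)) * |y - w| ≤ 4 * (|x - u| / 2 * √(p x * p u)) := by
        have := Real.sqrt_le_sqrt (mul_le_mul_of_nonneg_left hmu (hp0 x))
        nlinarith [Real.sqrt_nonneg (p x * min (p y) (p w))]
    _ ≤ 4 * ∫ z, p z := by gcongr; exact hp.abs_sub_mul_sqrt_le_integral hp0 hint hux.le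

end LogConcave

/-- The translates `{inf L} + K` and `{sup K} + L` of `K` and `L` lie in `K + L` and meet only at
`sup K + inf L`. -/
theorem volume_add_volume_le_volume_add {K L : Set ℝ} (hK : IsCompact K) (hK₀ : K.Nonempty)
    (hL : IsCompact L) (hL₀ : L.Nonempty) : volume K + volume L ≤ volume (K + L) := by
  have ha : sSup K ∈ K := hK.sSup_mem hK₀
  have hb : sInf L ∈ L := hL.sInf_mem hL₀
  have hdisj : AEDisjoint volume ({sInf L} + K) ({sSup K} + L) := by
    refine measure_mono_null (fun x ⟨hx₁, hx₂⟩ => ?_) (measure_singleton (sSup K + sInf L))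
    obtain ⟨_, rfl, k, hk, rfl⟩ := hx₁
    obtain ⟨_, rfl, m, hm, hkm⟩ := hx₂
    have := le_csSup hK.bddAbove hk
    have := csInf_le hL.bddBelow hm
    exact le_antisymm (by linarith) (by linarith)
  calc volume K + volume L = volume ({sInf L} + K) + volume ({sSup K} + L) := by
        simp only [singleton_add, image_add_left, measure_preimage_add]
    _ = volume (({sInf L} + K) ∪ ({sSup K} + L)) :=
        (measure_union₀ ((isCompact_singleton.add hL).measurableSet.nullMeasurableSet) hdisj).symm
    _ ≤ volume (K + L) := by
        refine measure_mono (union_subset ?_ (add_subset_add_right (singleton_subset_iff.2 ha)))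
        rw [add_comm K]
        exact add_subset_add_right (singleton_subset_iff.2 hb)

theorem ofReal_mul_volume_add_ofReal_mul_volume_le {A B S : Set ℝ} (hA : NullMeasurableSet A)
    (hB : NullMeasurableSet B) (hA₀ : A.Nonempty) (hB₀ : B.Nonempty) {l : ℝ} (hl0 : 0 ≤ l)
    (hl1 : l ≤ 1) (hS : l • A + (1 - l) • B ⊆ S) :
    ENNReal.ofReal l * volume A + ENNReal.ofReal (1 - l) * volume B ≤ volume S := by
  have hcompact : ∀ K, K ⊆ A ∧ IsCompact K → ∀ L, L ⊆ B ∧ IsCompact L →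
      ENNReal.ofReal l * volume K + ENNReal.ofReal (1 - l) * volume L ≤ volume S := by
    rintro K ⟨hKA, hK⟩ L ⟨hLB, hL⟩
    obtain ⟨a, ha⟩ := hA₀
    obtain ⟨b, hb⟩ := hB₀
    calc ENNReal.ofReal l * volume K + ENNReal.ofReal (1 - l) * volume L
        ≤ ENNReal.ofReal l * volume (insert a K) +
            ENNReal.ofReal (1 - l) * volume (insert b L) := by
          gcongr <;> exact subset_insert _ _
      _ = volume (l • insert a K) + volume ((1 - l) • insert b L) := by
          simp only [Measure.addHaar_smul_of_nonneg _ hl0,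
            Measure.addHaar_smul_of_nonneg _ (sub_nonneg.2 hl1), Module.finrank_self, pow_one]
      _ ≤ volume (l • insert a K + (1 - l) • insert b L) :=
          volume_add_volume_le_volume_add ((hK.insert a).smul l) (insert_nonempty _ _).smul_set
            ((hL.insert b).smul (1 - l)) (insert_nonempty _ _).smul_set
      _ ≤ volume S := measure_mono <| (add_subset_add (smul_set_mono (insert_subset ha hKA))
            (smul_set_mono (insert_subset hb hLB))).trans hS
  obtain ⟨A', hA'A, hA'm, hA'⟩ := hA.exists_measurable_subset_ae_eq
  obtain ⟨B', hB'B, hB'm, hB'⟩ := hB.exists_measurable_subset_ae_eq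
  rw [← measure_congr hA', ← measure_congr hB', hA'm.measure_eq_iSup_isCompact,
    hB'm.measure_eq_iSup_isCompact]
  simp only [ENNReal.mul_iSup, iSup_and']
  exact ENNReal.biSup_add_biSup_le' ⟨∅, empty_subset _, isCompact_empty⟩
    ⟨∅, empty_subset _, isCompact_empty⟩ fun K hK L hL =>
      hcompact K ⟨hK.1.trans hA'A, hK.2⟩ L ⟨hL.1.trans hB'B, hL.2⟩

theorem iSup_div_iSup_eq_one {ι : Sort*} {f : ι → ℝ} (hf : 0 < ⨆ i, f i) :
    ⨆ i, f i / ⨆ j, f j = 1 := by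
  simp_rw [div_eq_mul_inv, ← Real.iSup_mul_of_nonneg (inv_nonneg.2 hf.le)]
  exact mul_inv_cancel₀ hf.ne'

theorem MeasureTheory.Integrable.ofReal_integral_eq_lintegral_meas_lt {α : Type*}
    [MeasurableSpace α] {μ : Measure α} {f : α → ℝ} (hf : Integrable f μ) (hf0 : 0 ≤ᵐ[μ] f) :
    ENNReal.ofReal (∫ x, f x ∂μ) = ∫⁻ t in Ioi 0, μ {x | t < f x} := by
  rw [ofReal_integral_eq_lintegral_ofReal hf hf0,
    lintegral_eq_lintegral_meas_lt μ hf0 hf.aemeasurable]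

section PrekopaLeindler

variable {f g h : ℝ → ℝ} {l : ℝ}

theorem smul_superlevel_add_smul_superlevel_subset (hl0 : 0 < l) (hl1 : l < 1) {t : ℝ}
    (ht : 0 ≤ t) (hfgh : ∀ x y, f x ^ l * g y ^ (1 - l) ≤ h (l * x + (1 - l) * y)) :
    l • {x | t < f x} + (1 - l) • {x | t < g x} ⊆ {x | t < h x} := by
  rintro _ ⟨_, ⟨x, hx, rfl⟩, _, ⟨y, hy, rfl⟩, rfl⟩
  calc t = t ^ l * t ^ (1 - l) := by
        rw [← Real.rpow_add' ht (by simp), add_sub_cancel, Real.rpow_one]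
    _ < f x ^ l * g y ^ (1 - l) :=
        mul_lt_mul'' (Real.rpow_lt_rpow ht hx hl0) (Real.rpow_lt_rpow ht hy (sub_pos.2 hl1))
          (by positivity) (by positivity)
    _ ≤ h (l * x + (1 - l) * y) := hfgh x y

theorem add_integral_le_integral_of_iSup_eq_one (hf0 : ∀ x, 0 ≤ f x) (hg0 : ∀ x, 0 ≤ g x)
    (hh0 : ∀ x, 0 ≤ h x) (hfi : Integrable f) (hgi : Integrable g) (hhi : Integrable h)
    (hfb : BddAbove (range f)) (hgb : BddAbove (range g)) (hf1 : ⨆ x, f x = 1)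
    (hg1 : ⨆ x, g x = 1) (hl0 : 0 < l) (hl1 : l < 1)
    (hfgh : ∀ x y, f x ^ l * g y ^ (1 - l) ≤ h (l * x + (1 - l) * y)) :
    l * (∫ x, f x) + (1 - l) * ∫ x, g x ≤ ∫ x, h x := by
  have hlevel : ∀ t ∈ Ioi (0 : ℝ), ENNReal.ofReal l * volume {x | t < f x} +
      ENNReal.ofReal (1 - l) * volume {x | t < g x} ≤ volume {x | t < h x} := by
    intro t ht
    rcases lt_or_ge t 1 with ht1 | ht1
    · refine ofReal_mul_volume_add_ofReal_mul_volume_le ?_ ?_ ?_ ?_ hl0.le hl1.le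
        (smul_superlevel_add_smul_superlevel_subset hl0 hl1 (le_of_lt ht) hfgh)
      · exact nullMeasurableSet_lt aemeasurable_const hfi.aemeasurable
      · exact nullMeasurableSet_lt aemeasurable_const hgi.aemeasurable
      · exact exists_lt_of_lt_ciSup (hf1 ▸ ht1)
      · exact exists_lt_of_lt_ciSup (hg1 ▸ ht1)
    · have hf : {x | t < f x} = ∅ := eq_empty_of_forall_notMem fun x hx =>
        (hx.trans_le ((le_ciSup hfb x).trans_eq hf1)).not_ge ht1
      have hg : {x | t < g x} = ∅ := eq_empty_of_forall_notMem fun x hx =>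
        (hx.trans_le ((le_ciSup hgb x).trans_eq hg1)).not_ge ht1
      simp [hf, hg]
  have hmeas (φ : ℝ → ℝ) : Measurable fun t => volume {x | t < φ x} :=
    Antitone.measurable fun s t hst => measure_mono fun x hx => hst.trans_lt hx
  have hhint : 0 ≤ ∫ x, h x := integral_nonneg hh0
  rw [← ENNReal.ofReal_le_ofReal_iff hhint,
    ENNReal.ofReal_add (mul_nonneg hl0.le (integral_nonneg hf0))
      (mul_nonneg (sub_nonneg.2 hl1.le) (integral_nonneg hg0)),
    ENNReal.ofReal_mul hl0.le, ENNReal.ofReal_mul (sub_nonneg.2 hl1.le),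
    hfi.ofReal_integral_eq_lintegral_meas_lt (.of_forall hf0),
    hgi.ofReal_integral_eq_lintegral_meas_lt (.of_forall hg0),
    hhi.ofReal_integral_eq_lintegral_meas_lt (.of_forall hh0),
    ← lintegral_const_mul' _ _ ENNReal.ofReal_ne_top,
    ← lintegral_const_mul' _ _ ENNReal.ofReal_ne_top,
    ← lintegral_add_left ((hmeas f).const_mul _)]
  exact setLIntegral_mono (hmeas h) hlevel

theorem integral_rpow_mul_integral_rpow_le (hf0 : ∀ x, 0 ≤ f x) (hg0 : ∀ x, 0 ≤ g x)
    (hh0 : ∀ x, 0 ≤ h x) (hfi : Integrable f) (hgi : Integrable g) (hhi : Integrable h)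
    (hfb : BddAbove (range f)) (hgb : BddAbove (range g)) (hl0 : 0 < l) (hl1 : l < 1)
    (hfgh : ∀ x y, f x ^ l * g y ^ (1 - l) ≤ h (l * x + (1 - l) * y)) :
    (∫ x, f x) ^ l * (∫ x, g x) ^ (1 - l) ≤ ∫ x, h x := by
  have hhint : 0 ≤ ∫ x, h x := integral_nonneg hh0
  obtain hSf | hSf := ((hf0 0).trans (le_ciSup hfb 0)).eq_or_lt
  · have : f = 0 := funext fun x => le_antisymm ((le_ciSup hfb x).trans hSf.ge) (hf0 x)
    simpa [this, Real.zero_rpow hl0.ne'] using hhint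
  obtain hSg | hSg := ((hg0 0).trans (le_ciSup hgb 0)).eq_or_lt
  · have : g = 0 := funext fun x => le_antisymm ((le_ciSup hgb x).trans hSg.ge) (hg0 x)
    simpa [this, Real.zero_rpow (sub_pos.2 hl1).ne'] using hhint
  set Sf := ⨆ x, f x
  set Sg := ⨆ x, g x
  set C := Sf ^ l * Sg ^ (1 - l) with hC_def
  have hC : 0 < C := by positivity
  have hnormalized := add_integral_le_integral_of_iSup_eq_one
    (f := fun x => f x / Sf) (g := fun x => g x / Sg) (h := fun x => h x / C)
    (fun x => div_nonneg (hf0 x) hSf.le) (fun x => div_nonneg (hg0 x) hSg.le)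
    (fun x => div_nonneg (hh0 x) hC.le) (hfi.div_const _) (hgi.div_const _) (hhi.div_const _)
    (hfb.range_comp_left fun _ _ h => div_le_div_of_nonneg_right h hSf.le)
    (hgb.range_comp_left fun _ _ h => div_le_div_of_nonneg_right h hSg.le)
    (iSup_div_iSup_eq_one hSf) (iSup_div_iSup_eq_one hSg)
    hl0 hl1 fun x y => by
      rw [Real.div_rpow (hf0 x) hSf.le, Real.div_rpow (hg0 y) hSg.le, div_mul_div_comm]
      exact div_le_div_of_nonneg_right (hfgh x y) hC.le
  simp only [integral_div] at hnormalized
  calc (∫ x, f x) ^ l * (∫ x, g x) ^ (1 - l)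
      = C * (((∫ x, f x) / Sf) ^ l * ((∫ x, g x) / Sg) ^ (1 - l)) := by
        rw [Real.div_rpow (integral_nonneg hf0) hSf.le,
          Real.div_rpow (integral_nonneg hg0) hSg.le, hC_def]
        field_simp
    _ ≤ C * (l * ((∫ x, f x) / Sf) + (1 - l) * ((∫ x, g x) / Sg)) := by
        gcongr
        exact Real.geom_mean_le_arith_mean2_weighted hl0.le (sub_nonneg.2 hl1.le)
          (div_nonneg (integral_nonneg hf0) hSf.le) (div_nonneg (integral_nonneg hg0) hSg.le)
          (by ring)
    _ ≤ C * ((∫ x, h x) / C) := by gcongr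
    _ = ∫ x, h x := mul_div_cancel₀ _ hC.ne'

end PrekopaLeindler

section Convolution

variable {p q : ℝ → ℝ}

theorem IsLogConcave.rpow_mul_rpow_le_comp_sub_mul (hp0 : ∀ x, 0 ≤ p x) (hq0 : ∀ x, 0 ≤ q x)
    (hp : IsLogConcave p) (hq : IsLogConcave q) {a b l : ℝ} (hl0 : 0 ≤ l) (hl1 : l ≤ 1)
    (x y : ℝ) :
    (p (a - x) * q x) ^ l * (p (b - y) * q y) ^ (1 - l) ≤
      p (l * a + (1 - l) * b - (l * x + (1 - l) * y)) * q (l * x + (1 - l) * y) :=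
  calc (p (a - x) * q x) ^ l * (p (b - y) * q y) ^ (1 - l)
      = (p (a - x) ^ l * p (b - y) ^ (1 - l)) * (q x ^ l * q y ^ (1 - l)) := by
        rw [Real.mul_rpow (hp0 _) (hq0 _), Real.mul_rpow (hp0 _) (hq0 _)]
        ring
    _ ≤ p (l * (a - x) + (1 - l) * (b - y)) * q (l * x + (1 - l) * y) :=
        mul_le_mul (hp _ _ l hl0 hl1) (hq x y l hl0 hl1)
          (mul_nonneg (Real.rpow_nonneg (hq0 x) _) (Real.rpow_nonneg (hq0 y) _)) (hp0 _)
    _ = p (l * a + (1 - l) * b - (l * x + (1 - l) * y)) * q (l * x + (1 - l) * y) := by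
        ring_nf

theorem integrable_comp_sub_mul (hp0 : ∀ x, 0 ≤ p x) (hpi : Integrable p)
    (hpb : BddAbove (range p)) (hqi : Integrable q) (a : ℝ) :
    Integrable fun y => p (a - y) * q y := by
  obtain ⟨M, hM⟩ := hpb
  refine hqi.bdd_mul (c := M) (hpi.comp_sub_left a).aestronglyMeasurable
    (.of_forall fun y => ?_)
  rw [Real.norm_of_nonneg (hp0 _)]
  exact hM ⟨_, rfl⟩

end Convolution

/-- The convolution of two integrable log-concave nonnegative functions on `ℝ`
is log-concave. -/
theorem convolution_logConcave (p q : ℝ → ℝ)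
    (hp_nonneg : ∀ x, 0 ≤ p x) (hq_nonneg : ∀ x, 0 ≤ q x)
    (hp_int : Integrable p) (hq_int : Integrable q)
    (hp : ∀ a b : ℝ, ∀ l : ℝ, 0 ≤ l → l ≤ 1 →
        (p a) ^ l * (p b) ^ (1 - l) ≤ p (l * a + (1 - l) * b))
    (hq : ∀ a b : ℝ, ∀ l : ℝ, 0 ≤ l → l ≤ 1 →
        (q a) ^ l * (q b) ^ (1 - l) ≤ q (l * a + (1 - l) * b))
    (r : ℝ → ℝ)
    (hr : ∀ x, r x = ∫ y, p (x - y) * q y) :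
    ∀ a b : ℝ, ∀ l : ℝ, 0 ≤ l → l ≤ 1 →
      (r a) ^ l * (r b) ^ (1 - l) ≤ r (l * a + (1 - l) * b) := by
  intro a b l hl0 hl1
  rcases hl0.eq_or_lt with rfl | hl0
  · simp
  rcases hl1.eq_or_lt with rfl | hl1
  · simp
  have hpb := IsLogConcave.bddAbove_range hp_nonneg hp_int hp
  have hqb := IsLogConcave.bddAbove_range hq_nonneg hq_int hq
  have hF0 (c y : ℝ) : 0 ≤ p (c - y) * q y := mul_nonneg (hp_nonneg _) (hq_nonneg _)
  have hFb (c : ℝ) : BddAbove (range fun y => p (c - y) * q y) :=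
    bddAbove_range_mul (hpb.mono (range_comp_subset_range _ _)) (fun _ => hp_nonneg _) hqb
      hq_nonneg
  simp only [hr]
  exact integral_rpow_mul_integral_rpow_le (hF0 a) (hF0 b) (hF0 _)
    (integrable_comp_sub_mul hp_nonneg hp_int hpb hq_int a)
    (integrable_comp_sub_mul hp_nonneg hp_int hpb hq_int b)
    (integrable_comp_sub_mul hp_nonneg hp_int hpb hq_int _) (hFb a) (hFb b) hl0 hl1
    (IsLogConcave.rpow_mul_rpow_le_comp_sub_mul hp_nonneg hq_nonneg hp hq hl0.le hl1.le)
end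

section
/- Let (X_t)_{t≥0} be integrable real random variables with laws (μ_t) and integrated survival function C_μ(t,x) = E[(X_t - x)⁺]. If C_μ is TP₂ on ℝ≥0 × ℝ (i.e., C_μ(t₁,x₁)C_μ(t₂,x₂) ≥ C_μ(t₁,x₂)C_μ(t₂,x₁) for all t₁ ≤ t₂, x₁ ≤ x₂), then for every x ∈ ℝ, the map t ↦ C_μ(t,x) is non-decreasing. -/
open MeasureTheory

/-! For `z → -∞` both `C(s, z)` and `C(t, z)` grow like `-z`: `C(t, z) ≥ E[X_t] - z` and
`C(s, z) ≤ E[X_s⁺] - z`. Plugging `x₁ = z ≤ x₂ = x` into the TP₂ inequality gives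
`C(s, x) (E[X_t] - z) ≤ (E[X_s⁺] - z) C(t, x)`, i.e. `(C(t, x) - C(s, x)) z` is bounded above,
which forces `C(s, x) ≤ C(t, x)`. -/

theorem nonneg_of_forall_mul_le {m c z₀ : ℝ} (h : ∀ z ≤ z₀, m * z ≤ c) : 0 ≤ m := by
  by_contra! hm
  have hlarge : c + 1 ≤ m * min z₀ ((c + 1) / m) :=
    calc c + 1 = m * ((c + 1) / m) := (mul_div_cancel₀ _ hm.ne).symm
      _ ≤ m * min z₀ ((c + 1) / m) := mul_le_mul_of_nonpos_left (min_le_right _ _) hm.le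
  linarith [h (min z₀ ((c + 1) / m)) (min_le_left _ _)]

theorem le_of_forall_mul_le_mul_of_linear_growth {f g : ℝ → ℝ} {a b A B z₀ : ℝ}
    (ha : 0 ≤ a) (hb : 0 ≤ b) (hf : ∀ z ≤ z₀, B - z ≤ f z) (hg : ∀ z ≤ z₀, g z ≤ A - z)
    (h : ∀ z ≤ z₀, a * f z ≤ g z * b) : a ≤ b := by
  refine sub_nonneg.1 (nonneg_of_forall_mul_le (z₀ := z₀) (c := A * b - a * B) fun z hz => ?_)
  have key : a * (B - z) ≤ (A - z) * b :=
    calc a * (B - z) ≤ a * f z := mul_le_mul_of_nonneg_left (hf z hz) ha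
      _ ≤ g z * b := h z hz
      _ ≤ (A - z) * b := mul_le_mul_of_nonneg_right (hg z hz) hb
  linear_combination key

section IntegratedSurvival

variable {Ω : Type*} [MeasurableSpace Ω] {P : Measure Ω} [IsProbabilityMeasure P] {Y : Ω → ℝ}

theorem integral_sub_le_integral_max_sub_zero (hY : Integrable Y P) (z : ℝ) :
    ∫ ω, Y ω ∂P - z ≤ ∫ ω, max (Y ω - z) 0 ∂P := by
  calc ∫ ω, Y ω ∂P - z = ∫ ω, Y ω - z ∂P := by
        rw [integral_sub hY (integrable_const z), integral_const]; simp
    _ ≤ ∫ ω, max (Y ω - z) 0 ∂P :=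
        integral_mono (hY.sub (integrable_const z)) (hY.sub (integrable_const z)).pos_part
          fun ω => le_max_left _ _

theorem integral_max_sub_zero_le (hY : Integrable Y P) {z : ℝ} (hz : z ≤ 0) :
    ∫ ω, max (Y ω - z) 0 ∂P ≤ ∫ ω, max (Y ω) 0 ∂P - z := by
  calc ∫ ω, max (Y ω - z) 0 ∂P ≤ ∫ ω, max (Y ω) 0 - z ∂P :=
        integral_mono (hY.sub (integrable_const z)).pos_part
          (hY.pos_part.sub (integrable_const z)) fun ω => by
            simp only [max_le_iff]
            constructor <;> linarith [le_max_left (Y ω) 0, le_max_right (Y ω) 0]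
    _ = ∫ ω, max (Y ω) 0 ∂P - z := by
        rw [integral_sub hY.pos_part (integrable_const z), integral_const]; simp

end IntegratedSurvival

theorem tp2_implies_increasing_convex_order_general {Ω : Type*} [MeasurableSpace Ω]
    (P : Measure Ω) [IsProbabilityMeasure P]
    (X : ℝ → Ω → ℝ)
    (hint : ∀ t, 0 ≤ t → Integrable (X t) P)
    (C : ℝ → ℝ → ℝ)
    (hC : ∀ t, 0 ≤ t → ∀ x : ℝ, C t x = ∫ ω, max (X t ω - x) 0 ∂P)
    (hTP2 : ∀ t₁ t₂ : ℝ, 0 ≤ t₁ → t₁ ≤ t₂ → ∀ x₁ x₂ : ℝ, x₁ ≤ x₂ →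
        C t₁ x₂ * C t₂ x₁ ≤ C t₁ x₁ * C t₂ x₂) :
    ∀ x : ℝ, ∀ s t : ℝ, 0 ≤ s → s ≤ t → C s x ≤ C t x := by
  intro x s t hs hst
  have ht : 0 ≤ t := hs.trans hst
  have hC_nonneg : ∀ u, 0 ≤ u → 0 ≤ C u x := fun u hu => by
    rw [hC u hu x]
    exact integral_nonneg fun ω => le_max_right _ _
  refine le_of_forall_mul_le_mul_of_linear_growth (f := C t) (g := C s) (z₀ := min x 0)
    (A := ∫ ω, max (X s ω) 0 ∂P) (B := ∫ ω, X t ω ∂P)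
    (hC_nonneg s hs) (hC_nonneg t ht) (fun z _ => ?_) (fun z hz => ?_)
    (fun z hz => hTP2 s t hs hst z x (hz.trans (min_le_left _ _)))
  · rw [hC t ht z]
    exact integral_sub_le_integral_max_sub_zero (hint t ht) z
  · rw [hC s hs z]
    exact integral_max_sub_zero_le (hint s hs) (hz.trans (min_le_right _ _))

/-- If the integrated survival function `C(t,x) = E[(X_t - x)⁺]` of a family of integrable
random variables is TP₂ on `ℝ≥0 × ℝ`, then `t ↦ C(t,x)` is non-decreasing for every `x`. -/
theorem tp2_implies_increasing_convex_order {Ω : Type*} [MeasurableSpace Ω]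
    (P : Measure Ω) [IsProbabilityMeasure P]
    (X : ℝ → Ω → ℝ)
    (hmeas : ∀ t, 0 ≤ t → Measurable (X t))
    (hint : ∀ t, 0 ≤ t → Integrable (X t) P)
    (C : ℝ → ℝ → ℝ)
    (hC : ∀ t, 0 ≤ t → ∀ x : ℝ, C t x = ∫ ω, max (X t ω - x) 0 ∂P)
    (hTP2 : ∀ t₁ t₂ : ℝ, 0 ≤ t₁ → t₁ ≤ t₂ → ∀ x₁ x₂ : ℝ, x₁ ≤ x₂ →
        C t₁ x₂ * C t₂ x₁ ≤ C t₁ x₁ * C t₂ x₂) :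
    ∀ x : ℝ, ∀ s t : ℝ, 0 ≤ s → s ≤ t → C s x ≤ C t x :=
  tp2_implies_increasing_convex_order_general P X hint C hC hTP2
end

section
/- Let (X_t)_{t≥0} be integrable real random variables with laws μ_t, and let Ψ_{μ_t}(x) = x + (1/μ_t([x,∞))) ∫_{[x,∞)} (y-x) μ_t(dy) for x < b_{μ_t}, Ψ_{μ_t}(x) = x otherwise, be the Hardy–Littlewood functions. Then t ↦ Ψ_{μ_t}(x) is non-decreasing for every x ∈ ℝ (i.e., (X_t) increases in the MRL order) if and only if the integrated survival function C_μ(t,x) = E[(X_t - x)⁺] is TP₂ on ℝ≥0 × ℝ. -/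
/-!
Write `C ν x = ∫ (y - x)⁺ dν`. Its left derivative is `-ν [x, ∞)`, so `Ψ ν x = x + C ν x / ν [x, ∞)`
and `Ψ ν₁ x ≤ Ψ ν₂ x` amounts to `C ν₁ x · ν₂ [x, ∞) ≤ C ν₂ x · ν₁ [x, ∞)`, i.e. to the left
derivative of `C ν₂ / C ν₁` being nonnegative. Integrating gives TP₂; conversely TP₂ at `(x', x)`
with `x' ↑ x` gives back the derivative inequality. In the degenerate case `ν₂ [x, ∞) = 0`, TP₂
forces `C ν₁ x = 0` because `C ν₂` is positive far to the left.
-/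

open MeasureTheory Set Filter Topology

lemma le_of_hasDerivWithinAt_Iic_nonneg {f f' : ℝ → ℝ} {a b : ℝ} (hf : ContinuousOn f (Icc a b))
    (hf' : ∀ x ∈ Ioc a b, HasDerivWithinAt f (f' x) (Iic x) x)
    (hf'_nonneg : ∀ x ∈ Ioc a b, 0 ≤ f' x) (hab : a ≤ b) : f a ≤ f b := by
  -- Reflect through `x ↦ -x` to turn left derivatives into right ones.
  have hmem : ∀ w ∈ Ico (-b) (-a), -w ∈ Ioc a b := fun w hw =>
    ⟨lt_neg_of_lt_neg hw.2, neg_le.1 hw.1⟩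
  have hderiv : ∀ w ∈ Ico (-b) (-a), HasDerivWithinAt (fun w => f (-w)) (-f' (-w)) (Ici w) w := by
    intro w hw
    have h := (hf' (-w) (hmem w hw)).comp w (hasDerivAt_neg w).hasDerivWithinAt
      (show MapsTo Neg.neg (Ici w) (Iic (-w)) from fun _ hv => mem_Iic.2 (neg_le_neg hv))
    rwa [mul_neg_one] at h
  have hfneg := image_le_of_deriv_right_le_deriv_boundary (B := fun _ => f b) (B' := 0)
    (hf.comp continuousOn_neg fun w hw => ⟨le_neg.1 hw.2, neg_le.1 hw.1⟩) hderiv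
    (by simp) continuousOn_const (fun _ _ => hasDerivWithinAt_const _ _ _)
    (fun w hw => neg_nonpos.2 (hf'_nonneg _ (hmem w hw))) (x := -a) ⟨neg_le_neg hab, le_rfl⟩
  simpa using hfneg

lemma abs_max_sub_zero_sub_max_sub_zero_le (y a b : ℝ) :
    |max (y - a) 0 - max (y - b) 0| ≤ |a - b| :=
  (abs_max_sub_max_le_abs _ _ _).trans_eq (by rw [sub_sub_sub_cancel_left, abs_sub_comm])

lemma tendsto_slope_max_sub_zero_nhdsLT (x y : ℝ) :
    Tendsto (slope (fun v => max (y - v) 0) x) (𝓝[<] x) (𝓝 (-(Ici x).indicator 1 y)) := by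
  rcases le_or_gt x y with hxy | hyx
  · rw [indicator_of_mem (mem_Ici.2 hxy)]
    refine tendsto_const_nhds.congr' ?_
    filter_upwards [self_mem_nhdsWithin] with v (hv : v < x)
    rw [slope_def_field, max_eq_left (by linarith), max_eq_left (by linarith),
      sub_sub_sub_cancel_left, ← neg_sub, neg_div_self (sub_ne_zero.2 hv.ne)]
    rfl
  · rw [indicator_of_notMem (notMem_Ici.2 hyx), neg_zero]
    refine tendsto_const_nhds.congr' ?_
    filter_upwards [Ioo_mem_nhdsLT hyx] with v hv
    rw [slope_def_field, max_eq_right (by linarith [hv.1]), max_eq_right (by linarith), sub_self,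
      zero_div]

noncomputable def integratedSurvival (ν : Measure ℝ) (x : ℝ) : ℝ := ∫ y, max (y - x) 0 ∂ν

noncomputable def hardyLittlewood (ν : Measure ℝ) (x : ℝ) : ℝ :=
  if ν (Ici x) ≠ 0 then x + (∫ y in Ici x, (y - x) ∂ν) / ν.real (Ici x) else x

section

variable {ν ν₁ ν₂ : Measure ℝ}

lemma integratedSurvival_nonneg (ν : Measure ℝ) (x : ℝ) : 0 ≤ integratedSurvival ν x :=
  integral_nonneg fun _ => le_max_right _ _

lemma integrable_max_sub_zero [IsFiniteMeasure ν] (hν : Integrable (fun y : ℝ => y) ν) (x : ℝ) :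
    Integrable (fun y => max (y - x) 0) ν :=
  (hν.sub (integrable_const x)).pos_part

lemma antitone_integratedSurvival [IsFiniteMeasure ν] (hν : Integrable (fun y : ℝ => y) ν) :
    Antitone (integratedSurvival ν) := fun _ _ huv =>
  integral_mono (integrable_max_sub_zero hν _) (integrable_max_sub_zero hν _) fun _ =>
    max_le_max (by linarith) le_rfl

lemma continuous_integratedSurvival [IsFiniteMeasure ν] (hν : Integrable (fun y : ℝ => y) ν) :
    Continuous (integratedSurvival ν) := by
  refine (LipschitzWith.of_dist_le_mul (K := (ν univ).toNNReal) fun a b => ?_).continuous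
  rw [Real.dist_eq, Real.dist_eq, ← Real.norm_eq_abs, ENNReal.coe_toNNReal_eq_toReal,
    integratedSurvival, integratedSurvival, ← integral_sub (integrable_max_sub_zero hν a)
      (integrable_max_sub_zero hν b), mul_comm]
  exact norm_integral_le_of_norm_le_const (ae_of_all _ fun y =>
    (Real.norm_eq_abs _).trans_le (abs_max_sub_zero_sub_max_sub_zero_le y a b))

lemma integratedSurvival_eq_zero_of_measure_Ici_eq_zero {x : ℝ} (h : ν (Ici x) = 0) :
    integratedSurvival ν x = 0 := by
  refine integral_eq_zero_of_ae ?_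
  filter_upwards [measure_eq_zero_iff_ae_notMem.1 h] with y (hy : ¬ x ≤ y)
  exact max_eq_right (by linarith)

lemma setIntegral_Ici_sub_eq_integratedSurvival (ν : Measure ℝ) (x : ℝ) :
    ∫ y in Ici x, (y - x) ∂ν = integratedSurvival ν x := by
  rw [integratedSurvival, ← setIntegral_eq_integral_of_forall_compl_eq_zero
    fun y (hy : ¬ x ≤ y) => max_eq_right (by linarith)]
  exact setIntegral_congr_fun measurableSet_Ici fun y hy => (max_eq_left (sub_nonneg.2 hy)).symm

lemma exists_le_integratedSurvival_pos [IsProbabilityMeasure ν]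
    (hν : Integrable (fun y : ℝ => y) ν) (x : ℝ) :
    ∃ x' ≤ x, 0 < integratedSurvival ν x' := by
  set x' := min x (∫ y, y ∂ν - 1)
  refine ⟨x', min_le_left _ _, ?_⟩
  calc 0 < ∫ y, y ∂ν - x' := by linarith [min_le_right x (∫ y, y ∂ν - 1)]
    _ = ∫ y, (y - x') ∂ν := by
      rw [integral_sub hν (integrable_const x'), integral_const, probReal_univ, one_smul]
    _ ≤ integratedSurvival ν x' :=
      integral_mono (hν.sub (integrable_const x')) (integrable_max_sub_zero hν x') fun _ =>
        le_max_left _ _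

lemma hasDerivWithinAt_integratedSurvival_Iic [IsFiniteMeasure ν]
    (hν : Integrable (fun y : ℝ => y) ν) (x : ℝ) :
    HasDerivWithinAt (integratedSurvival ν) (-ν.real (Ici x)) (Iic x) x := by
  have hslope : slope (integratedSurvival ν) x =
      fun v => ∫ y, slope (fun v => max (y - v) 0) x v ∂ν := by
    ext v
    simp only [slope_def_field, integratedSurvival]
    rw [integral_div, integral_sub (integrable_max_sub_zero hν v) (integrable_max_sub_zero hν x)]
  have hlim : Tendsto (fun v => ∫ y, slope (fun v => max (y - v) 0) x v ∂ν) (𝓝[<] x)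
      (𝓝 (∫ y, -(Ici x).indicator 1 y ∂ν)) := by
    refine tendsto_integral_filter_of_dominated_convergence (fun _ => 1) ?_ ?_
      (integrable_const 1) (ae_of_all _ (tendsto_slope_max_sub_zero_nhdsLT x))
    · exact Eventually.of_forall fun v =>
        (Continuous.aestronglyMeasurable (by simp only [slope_def_field]; fun_prop))
    · refine Eventually.of_forall fun v => ae_of_all _ fun y => ?_
      rw [slope_def_field, Real.norm_eq_abs, abs_div]
      exact div_le_one_of_le₀ (abs_max_sub_zero_sub_max_sub_zero_le y v x) (abs_nonneg _)
  rw [integral_neg, integral_indicator_one measurableSet_Ici] at hlim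
  rwa [hasDerivWithinAt_iff_tendsto_slope, Iic_sdiff_right, hslope]

-- When `ν (Ici x) = 0` the `else` branch still fits the formula: `C ν x = 0` and `_ / 0 = 0`.
lemma hardyLittlewood_eq_add_div (ν : Measure ℝ) (x : ℝ) :
    hardyLittlewood ν x = x + integratedSurvival ν x / ν.real (Ici x) := by
  rw [hardyLittlewood, setIntegral_Ici_sub_eq_integratedSurvival, ite_eq_left_iff, not_not]
  intro h
  rw [integratedSurvival_eq_zero_of_measure_Ici_eq_zero h, zero_div, add_zero]

lemma hardyLittlewood_le_iff [IsFiniteMeasure ν₁] [IsFiniteMeasure ν₂] (x : ℝ) :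
    hardyLittlewood ν₁ x ≤ hardyLittlewood ν₂ x ↔
      integratedSurvival ν₁ x * ν₂.real (Ici x) ≤ integratedSurvival ν₂ x * ν₁.real (Ici x) ∧
        (ν₂ (Ici x) = 0 → integratedSurvival ν₁ x = 0) := by
  rw [hardyLittlewood_eq_add_div, hardyLittlewood_eq_add_div, add_le_add_iff_left]
  by_cases h₁ : ν₁ (Ici x) = 0
  · have hm₁ : ν₁.real (Ici x) = 0 := by rw [measureReal_def, h₁, ENNReal.toReal_zero]
    simp only [integratedSurvival_eq_zero_of_measure_Ici_eq_zero h₁, hm₁, zero_div, zero_mul,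
      mul_zero, le_refl, true_and, implies_true, iff_true]
    exact div_nonneg (integratedSurvival_nonneg _ _) measureReal_nonneg
  have hm₁ : 0 < ν₁.real (Ici x) := ENNReal.toReal_pos h₁ (measure_ne_top _ _)
  by_cases h₂ : ν₂ (Ici x) = 0
  · have hm₂ : ν₂.real (Ici x) = 0 := by rw [measureReal_def, h₂, ENNReal.toReal_zero]
    simp only [integratedSurvival_eq_zero_of_measure_Ici_eq_zero h₂, hm₂, div_zero, mul_zero,
      zero_mul, le_refl, true_and, h₂, forall_const]
    rw [div_le_iff₀ hm₁, zero_mul, (integratedSurvival_nonneg _ _).ge_iff_eq, eq_comm]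
  have hm₂ : 0 < ν₂.real (Ici x) := ENNReal.toReal_pos h₂ (measure_ne_top _ _)
  simp [div_le_div_iff₀ hm₁ hm₂, h₂]

theorem integratedSurvival_mul_le_mul_of_mul_measureReal_Ici_le
    [IsFiniteMeasure ν₁] [IsFiniteMeasure ν₂]
    (h₁ : Integrable (fun y : ℝ => y) ν₁) (h₂ : Integrable (fun y : ℝ => y) ν₂)
    (h : ∀ x, integratedSurvival ν₁ x * ν₂.real (Ici x) ≤
      integratedSurvival ν₂ x * ν₁.real (Ici x))
    {x₁ x₂ : ℝ} (hx : x₁ ≤ x₂) :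
    integratedSurvival ν₁ x₂ * integratedSurvival ν₂ x₁ ≤
      integratedSurvival ν₁ x₁ * integratedSurvival ν₂ x₂ := by
  rcases (integratedSurvival_nonneg ν₁ x₂).eq_or_lt with h0 | hpos
  · rw [← h0, zero_mul]
    exact mul_nonneg (integratedSurvival_nonneg _ _) (integratedSurvival_nonneg _ _)
  have hC₁ : ∀ u ∈ Icc x₁ x₂, integratedSurvival ν₁ u ≠ 0 := fun u hu =>
    (hpos.trans_le (antitone_integratedSurvival h₁ hu.2)).ne'
  have hratio : integratedSurvival ν₂ x₁ / integratedSurvival ν₁ x₁ ≤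
      integratedSurvival ν₂ x₂ / integratedSurvival ν₁ x₂ := by
    refine le_of_hasDerivWithinAt_Iic_nonneg
      ((continuous_integratedSurvival h₂).continuousOn.div
        (continuous_integratedSurvival h₁).continuousOn hC₁)
      (fun u hu => (hasDerivWithinAt_integratedSurvival_Iic h₂ u).div
        (hasDerivWithinAt_integratedSurvival_Iic h₁ u) (hC₁ u (Ioc_subset_Icc_self hu)))
      (fun u _ => div_nonneg ?_ (sq_nonneg _)) hx
    linarith [h u]
  rwa [div_le_div_iff₀ ((hC₁ x₁ ⟨le_rfl, hx⟩).lt_of_le' (integratedSurvival_nonneg _ _)) hpos,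
    mul_comm, mul_comm (integratedSurvival ν₂ x₂)] at hratio

theorem mul_measureReal_Ici_le_of_integratedSurvival_mul_le [IsFiniteMeasure ν₁]
    [IsFiniteMeasure ν₂] (h₁ : Integrable (fun y : ℝ => y) ν₁)
    (h₂ : Integrable (fun y : ℝ => y) ν₂)
    (htp : ∀ x₁ x₂, x₁ ≤ x₂ → integratedSurvival ν₁ x₂ * integratedSurvival ν₂ x₁ ≤
      integratedSurvival ν₁ x₁ * integratedSurvival ν₂ x₂) (x : ℝ) :
    integratedSurvival ν₁ x * ν₂.real (Ici x) ≤ integratedSurvival ν₂ x * ν₁.real (Ici x) := by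
  -- By TP₂, `F ≤ 0 = F x` to the left of `x`, so the left derivative of `F` at `x` is `≥ 0`.
  set F : ℝ → ℝ := fun v => integratedSurvival ν₁ x * integratedSurvival ν₂ v -
    integratedSurvival ν₂ x * integratedSurvival ν₁ v
  have hF : HasDerivWithinAt F (integratedSurvival ν₁ x * -ν₂.real (Ici x) -
      integratedSurvival ν₂ x * -ν₁.real (Ici x)) (Iic x) x :=
    ((hasDerivWithinAt_integratedSurvival_Iic h₂ x).const_mul _).sub
      ((hasDerivWithinAt_integratedSurvival_Iic h₁ x).const_mul _)
  rw [hasDerivWithinAt_iff_tendsto_slope, Iic_sdiff_right] at hF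
  have hslope : ∀ᶠ v in 𝓝[<] x, 0 ≤ slope F x v := by
    filter_upwards [self_mem_nhdsWithin] with v (hv : v < x)
    rw [slope_def_field]
    exact div_nonneg_of_nonpos (by linarith [htp v x hv.le]) (by linarith)
  linarith [ge_of_tendsto hF hslope]

theorem integratedSurvival_eq_zero_of_mul_le [IsProbabilityMeasure ν₂]
    (h₂ : Integrable (fun y : ℝ => y) ν₂)
    (htp : ∀ x₁ x₂, x₁ ≤ x₂ → integratedSurvival ν₁ x₂ * integratedSurvival ν₂ x₁ ≤
      integratedSurvival ν₁ x₁ * integratedSurvival ν₂ x₂) {x : ℝ} (hx : ν₂ (Ici x) = 0) :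
    integratedSurvival ν₁ x = 0 := by
  obtain ⟨x', hx'x, hpos⟩ := exists_le_integratedSurvival_pos h₂ x
  have h := htp x' x hx'x
  rw [integratedSurvival_eq_zero_of_measure_Ici_eq_zero hx, mul_zero] at h
  exact le_antisymm (nonpos_of_mul_nonpos_left h hpos) (integratedSurvival_nonneg _ _)

end

/-- A family of integrable probability measures `(μ_t)` increases in the mean residual life
order (its Hardy–Littlewood functions are pointwise non-decreasing in `t`) if and only if
its integrated survival function `C(t,x) = ∫ (y - x)⁺ μ_t(dy)` is TP₂ on `ℝ≥0 × ℝ`. -/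
theorem mrl_order_iff_tp2 (μ : ℝ → Measure ℝ)
    (hprob : ∀ t, 0 ≤ t → IsProbabilityMeasure (μ t))
    (hint : ∀ t, 0 ≤ t → Integrable (fun y : ℝ => y) (μ t))
    (Ψ : ℝ → ℝ → ℝ)
    (hΨ : ∀ t, 0 ≤ t → ∀ x : ℝ, Ψ t x =
      if μ t (Set.Ici x) ≠ 0 then
        x + (∫ y in Set.Ici x, (y - x) ∂(μ t)) / (μ t (Set.Ici x)).toReal
      else x)
    (C : ℝ → ℝ → ℝ)
    (hC : ∀ t, 0 ≤ t → ∀ x : ℝ, C t x = ∫ y, max (y - x) 0 ∂(μ t)) :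
    (∀ x : ℝ, ∀ s t : ℝ, 0 ≤ s → s ≤ t → Ψ s x ≤ Ψ t x) ↔
    (∀ t₁ t₂ : ℝ, 0 ≤ t₁ → t₁ ≤ t₂ → ∀ x₁ x₂ : ℝ, x₁ ≤ x₂ →
      C t₁ x₂ * C t₂ x₁ ≤ C t₁ x₁ * C t₂ x₂) := by
  have hΨ' : ∀ t, 0 ≤ t → Ψ t = hardyLittlewood (μ t) := fun t ht => funext (hΨ t ht)
  have hC' : ∀ t, 0 ≤ t → C t = integratedSurvival (μ t) := fun t ht => funext (hC t ht)
  constructor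
  · intro hmrl t₁ t₂ ht₁ h12 x₁ x₂ hx
    have ht₂ := ht₁.trans h12
    have := hprob t₁ ht₁
    have := hprob t₂ ht₂
    rw [hC' t₁ ht₁, hC' t₂ ht₂]
    refine integratedSurvival_mul_le_mul_of_mul_measureReal_Ici_le (hint t₁ ht₁) (hint t₂ ht₂)
      (fun x => ?_) hx
    have h := hmrl x t₁ t₂ ht₁ h12
    rw [hΨ' t₁ ht₁, hΨ' t₂ ht₂, hardyLittlewood_le_iff] at h
    exact h.1
  · intro htp x s t hs hst
    have ht := hs.trans hst
    have := hprob s hs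
    have := hprob t ht
    have htp' := htp s t hs hst
    rw [hC' s hs, hC' t ht] at htp'
    rw [hΨ' s hs, hΨ' t ht, hardyLittlewood_le_iff]
    exact ⟨mul_measureReal_Ici_le_of_integratedSurvival_mul_le (hint s hs) (hint t ht) htp' x,
      integratedSurvival_eq_zero_of_mul_le (hint t ht) htp'⟩
end
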